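/- arXiv:2502.05861 — 11 statements merged into one kernel-verified Lean document; each statement's English description precedes it below -/
import Mathlib

section
/- A semigroup (S,+) is an inverse semigroup if and only if it is regular (every a has some a' with a + a' + a = a) and any two idempotents commute. -/
section Helpers
variable {S : Type*} [Semigroup S]

lemma invsemi_prod_idem (h : ∀ a : S, ∃! b : S, a*b*a = a ∧ b*a*b = b)
    {e f : S} (he : e*e = e) (hf : f*f = f) : (e*f)*(e*f) = e*f := by
  obtain ⟨x, ⟨hx1, hx2⟩, hxu⟩ := h (e*f)
  have he2 : ∀ z : S, e*(e*z) = e*z := fun z => by rw [← mul_assoc, he]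
  have hf2 : ∀ z : S, f*(f*z) = f*z := fun z => by rw [← mul_assoc, hf]
  simp only [mul_assoc] at hx1 hx2
  have hkey : x * (e * (f * (x * e))) = x * e := by
    rw [show x * (e * (f * (x * e))) = x * (e * (f * x)) * e from by simp only [mul_assoc], hx2]
  have hy : f*(x*e) = x := by
    apply hxu
    constructor
    · simp only [mul_assoc, he2, hf2]
      exact hx1
    · simp only [mul_assoc, he2, hf2]
      rw [hkey]
  have hxx : x * x = x := by
    conv_lhs => rw [← hy]
    simp only [mul_assoc, he2, hf2]
    rw [hkey]
    exact hy
  obtain ⟨w, hw, hwu⟩ := h x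
  have h1 : e*f = w := hwu _ ⟨by simp only [mul_assoc]; exact hx2, by simp only [mul_assoc]; exact hx1⟩
  have h2 : x = w := hwu _ ⟨by rw [hxx, hxx], by rw [hxx, hxx]⟩
  have h3 : x = e*f := h2.trans h1.symm
  rw [← h3]; exact hxx

lemma invsemi_idem_comm (h : ∀ a : S, ∃! b : S, a*b*a = a ∧ b*a*b = b)
    {e f : S} (he : e*e = e) (hf : f*f = f) : e*f = f*e := by
  have hef := invsemi_prod_idem h he hf
  have hfe := invsemi_prod_idem h hf he
  obtain ⟨w, hw, hwu⟩ := h (e*f)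
  have h1 : e*f = w := hwu _ ⟨by rw [hef, hef], by rw [hef, hef]⟩
  have h2 : f*e = w := by
    apply hwu
    have he2 : ∀ z : S, e*(e*z) = e*z := fun z => by rw [← mul_assoc, he]
    have hf2 : ∀ z : S, f*(f*z) = f*z := fun z => by rw [← mul_assoc, hf]
    constructor
    · simp only [mul_assoc, he2, hf2]
      simpa only [mul_assoc] using hef
    · simp only [mul_assoc, he2, hf2]
      simpa only [mul_assoc] using hfe
  rw [h1, h2]

end Helpers

/-- A semigroup `(S,+)` is an inverse semigroup (every element has a unique von Neumann
inverse) if and only if it is regular and any two idempotents commute. -/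
theorem inverse_semigroup_iff_regular_and_idempotents_commute
    {S : Type*} (add : S → S → S)
    (hassoc : ∀ a b c : S, add (add a b) c = add a (add b c)) :
    (∀ a : S, ∃! b : S, add (add a b) a = a ∧ add (add b a) b = b) ↔
      ((∀ a : S, ∃ a' : S, add (add a a') a = a) ∧
        (∀ e f : S, add e e = e → add f f = f → add e f = add f e)) := by
  letI : Mul S := ⟨add⟩
  letI : Semigroup S := { mul_assoc := hassoc }
  constructor
  · intro h
    refine ⟨fun a => (h a).exists.imp fun b hb => hb.1, fun e f he hf => ?_⟩
    exact invsemi_idem_comm h he hf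
  · rintro ⟨hreg, hcomm⟩ a
    obtain ⟨a', ha'⟩ := hreg a
    have ha : a * a' * a = a := ha'
    have ha2 : ∀ z : S, a*(a'*(a*z)) = a*z := fun z => by
      rw [← mul_assoc, ← mul_assoc, ha]
    have haR : a*(a'*a) = a := by simpa only [mul_assoc] using ha
    set b := a'*a*a' with hbdef
    have hb1 : a*b*a = a := by
      simp only [hbdef, mul_assoc, ha2]
      exact haR
    have hb2 : b*a*b = b := by
      simp only [hbdef, mul_assoc, ha2]
    refine ⟨b, ⟨hb1, hb2⟩, ?_⟩
    rintro c ⟨hc1', hc2'⟩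
    have hc1 : a*c*a = a := hc1'
    have hc2 : c*a*c = c := hc2'
    have hb2R : b*(a*b) = b := by simpa only [mul_assoc] using hb2
    have hc2R : c*(a*c) = c := by simpa only [mul_assoc] using hc2
    have h3 : ∀ z : S, a*(c*(a*z)) = a*z := fun z => by
      rw [← mul_assoc, ← mul_assoc, hc1]
    have h4 : ∀ z : S, a*(b*(a*z)) = a*z := fun z => by
      rw [← mul_assoc, ← mul_assoc, hb1]
    -- idempotents
    have iba : (b*a)*(b*a) = b*a := by
      rw [show (b*a)*(b*a) = (b*a*b)*a from by simp only [mul_assoc], hb2]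
    have ica : (c*a)*(c*a) = c*a := by
      rw [show (c*a)*(c*a) = (c*a*c)*a from by simp only [mul_assoc], hc2]
    have iab : (a*b)*(a*b) = a*b := by
      rw [show (a*b)*(a*b) = (a*b*a)*b from by simp only [mul_assoc], hb1]
    have iac : (a*c)*(a*c) = a*c := by
      rw [show (a*c)*(a*c) = (a*c*a)*c from by simp only [mul_assoc], hc1]
    have comm1 : (b*a)*(c*a) = (c*a)*(b*a) := hcomm _ _ iba ica
    have comm2 : (a*b)*(a*c) = (a*c)*(a*b) := hcomm _ _ iab iac
    have q1 : b*(a*(c*(a*b))) = b := by rw [h3 b, hb2R]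
    have q2 : b*(a*(c*(a*b))) = c*(a*b) := by
      calc b*(a*(c*(a*b))) = ((b*a)*(c*a))*b := by simp only [mul_assoc]
        _ = ((c*a)*(b*a))*b := by rw [comm1]
        _ = c*(a*(b*(a*b))) := by simp only [mul_assoc]
        _ = c*(a*b) := by rw [hb2R]
    have q3 : c*(a*(b*(a*c))) = c := by rw [h4 c, hc2R]
    have q4 : c*(a*(b*(a*c))) = c*(a*b) := by
      calc c*(a*(b*(a*c))) = c*((a*b)*(a*c)) := by simp only [mul_assoc]
        _ = c*((a*c)*(a*b)) := by rw [comm2]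
        _ = (c*(a*c))*(a*b) := by simp only [mul_assoc]
        _ = c*(a*b) := by rw [hc2R]
    calc c = c*(a*b) := q3.symm.trans q4
      _ = b := q2.symm.trans q1
end

section
/- In a weak left brace (S,+,·), the additive idempotents coincide with the multiplicative idempotents: x + x = x if and only if x·x = x. -/
/-- In a weak left brace `(S,+,·)`, additive and multiplicative idempotents coincide. -/
theorem weak_left_brace_idempotents_coincide
    {S : Type*} (add mul : S → S → S) (neg inv : S → S)
    (haddassoc : ∀ a b c : S, add (add a b) c = add a (add b c))
    (hmulassoc : ∀ a b c : S, mul (mul a b) c = mul a (mul b c))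
    (hneg₁ : ∀ a : S, add (add a (neg a)) a = a)
    (hneg₂ : ∀ a : S, add (add (neg a) a) (neg a) = neg a)
    (hneguniq : ∀ a b : S, add (add a b) a = a → add (add b a) b = b → b = neg a)
    (hinv₁ : ∀ a : S, mul (mul a (inv a)) a = a)
    (hinv₂ : ∀ a : S, mul (mul (inv a) a) (inv a) = inv a)
    (hinvuniq : ∀ a b : S, mul (mul a b) a = a → mul (mul b a) b = b → b = inv a)
    (hdist : ∀ x y z : S, mul x (add y z) = add (add (mul x y) (neg x)) (mul x z))
    (hbrace : ∀ x : S, mul x (inv x) = add (neg x) x) :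
    ∀ x : S, add x x = x ↔ mul x x = x := by
  intro x
  constructor
  · intro h
    have hx : x = neg x := hneguniq x x (by rw [h, h]) (by rw [h, h])
    have h1 : mul x (inv x) = x := by rw [hbrace, ← hx, h]
    have h2 := hinv₁ x
    rw [h1] at h2
    exact h2
  · intro h
    have hx : x = inv x := hinvuniq x x (by rw [h, h]) (by rw [h, h])
    have h1 : add (neg x) x = x := by rw [← hbrace, ← hx, h]
    calc add x x = add x (add (neg x) x) := by rw [h1]
      _ = add (add x (neg x)) x := (haddassoc _ _ _).symm
      _ = x := hneg₁ x
end

section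
/- In a weak left brace (S,+,·), the additive reduct (S,+) is a Clifford semigroup, i.e., -a + a = a + (-a) for all a ∈ S. -/
/-- In a weak left brace `(S,+,·)`, the additive reduct is a Clifford semigroup:
`-a + a = a + (-a)` for all `a`. -/
theorem weak_left_brace_add_clifford
    {S : Type*} (add mul : S → S → S) (neg inv : S → S)
    (haddassoc : ∀ a b c : S, add (add a b) c = add a (add b c))
    (hmulassoc : ∀ a b c : S, mul (mul a b) c = mul a (mul b c))
    (hneg₁ : ∀ a : S, add (add a (neg a)) a = a)
    (hneg₂ : ∀ a : S, add (add (neg a) a) (neg a) = neg a)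
    (hneguniq : ∀ a b : S, add (add a b) a = a → add (add b a) b = b → b = neg a)
    (hinv₁ : ∀ a : S, mul (mul a (inv a)) a = a)
    (hinv₂ : ∀ a : S, mul (mul (inv a) a) (inv a) = inv a)
    (hinvuniq : ∀ a b : S, mul (mul a b) a = a → mul (mul b a) b = b → b = inv a)
    (hdist : ∀ x y z : S, mul x (add y z) = add (add (mul x y) (neg x)) (mul x z))
    (hbrace : ∀ x : S, mul x (inv x) = add (neg x) x) :
    ∀ a : S, add (neg a) a = add a (neg a) := by
  -- double negation
  have negneg : ∀ b : S, neg (neg b) = b := fun b =>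
    (hneguniq (neg b) b (hneg₂ b) (hneg₁ b)).symm
  -- an additive idempotent is its own additive inverse
  have idem_neg : ∀ u : S, add u u = u → neg u = u := fun u h =>
    (hneguniq u u (by rw [h, h]) (by rw [h, h])).symm
  -- a + (-a) is an additive idempotent
  have idem_e : ∀ c : S, add (add c (neg c)) (add c (neg c)) = add c (neg c) := by
    intro c
    rw [haddassoc, ← haddassoc (neg c) c (neg c), hneg₂]
  -- -a + a is an additive idempotent
  have idem_f : ∀ c : S, add (add (neg c) c) (add (neg c) c) = add (neg c) c := by
    intro c
    rw [haddassoc, ← haddassoc c (neg c) c, hneg₁]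
  -- the sum of two additive idempotents is an additive idempotent
  have sum_idem : ∀ u v : S, add u u = u → add v v = v →
      add (add u v) (add u v) = add u v := by
    intro u v hu hv
    have hu' : ∀ t, add u (add u t) = add u t := fun t => by rw [← haddassoc, hu]
    have hv' : ∀ t, add v (add v t) = add v t := fun t => by rw [← haddassoc, hv]
    have h1 := hneg₁ (add u v)
    have h2 := hneg₂ (add u v)
    have h1n : add u (add v (add (neg (add u v)) (add u v))) = add u v := by
      simpa only [haddassoc] using h1
    have h2e : ∀ t, add (neg (add u v)) (add u (add v (add (neg (add u v)) t)))
        = add (neg (add u v)) t := by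
      intro t
      have h2t : add (add (add (neg (add u v)) (add u v)) (neg (add u v))) t
          = add (neg (add u v)) t := by rw [h2]
      simpa only [haddassoc] using h2t
    have c1 : add (add (add u v) (add v (add (neg (add u v)) u))) (add u v) = add u v := by
      simp only [haddassoc, hv', hu']
      exact h1n
    have c2 : add (add (add v (add (neg (add u v)) u)) (add u v))
        (add v (add (neg (add u v)) u)) = add v (add (neg (add u v)) u) := by
      simp only [haddassoc, hv', hu']
      rw [h2e u]
    have hA : add v (add (neg (add u v)) u) = neg (add u v) :=
      hneguniq (add u v) (add v (add (neg (add u v)) u)) c1 c2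
    have hB : add (neg (add u v)) (neg (add u v)) = neg (add u v) := by
      rw [← hA]
      simp only [haddassoc, hv', hu']
      rw [h2e u]
    have hC : add u v = neg (neg (add u v)) :=
      hneguniq (neg (add u v)) (add u v) h2 h1
    have hE : add u v = neg (add u v) := hC.trans (idem_neg (neg (add u v)) hB)
    rw [hE]
    exact hB
  -- additive idempotents commute
  have comm_idem : ∀ u v : S, add u u = u → add v v = v → add u v = add v u := by
    intro u v hu hv
    have hu' : ∀ t, add u (add u t) = add u t := fun t => by rw [← haddassoc, hu]
    have hv' : ∀ t, add v (add v t) = add v t := fun t => by rw [← haddassoc, hv]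
    have su := sum_idem u v hu hv
    have sv := sum_idem v u hv hu
    have su' : add u (add v (add u v)) = add u v := by simpa only [haddassoc] using su
    have sv' : add v (add u (add v u)) = add v u := by simpa only [haddassoc] using sv
    have c1 : add (add (add u v) (add v u)) (add u v) = add u v := by
      simp only [haddassoc, hv', hu']
      exact su'
    have c2 : add (add (add v u) (add u v)) (add v u) = add v u := by
      simp only [haddassoc, hu', hv']
      exact sv'
    have h := hneguniq (add u v) (add v u) c1 c2
    rw [h, idem_neg (add u v) su]
  -- inverse of a sum
  have negadd : ∀ x y : S, neg (add x y) = add (neg y) (neg x) := by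
    intro x y
    have comm := comm_idem (add y (neg y)) (add (neg x) x) (idem_e y) (idem_f x)
    have comme : ∀ t, add y (add (neg y) (add (neg x) (add x t)))
        = add (neg x) (add x (add y (add (neg y) t))) := by
      intro t
      have ht : add (add (add y (neg y)) (add (neg x) x)) t
          = add (add (add (neg x) x) (add y (neg y))) t := by rw [comm]
      simpa only [haddassoc] using ht
    have n1y : add y (add (neg y) y) = y := by simpa only [haddassoc] using hneg₁ y
    have n1xe : ∀ t, add x (add (neg x) (add x t)) = add x t := by
      intro t
      have ht : add (add (add x (neg x)) x) t = add x t := by rw [hneg₁ x]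
      simpa only [haddassoc] using ht
    have n2x : add (neg x) (add x (neg x)) = neg x := by simpa only [haddassoc] using hneg₂ x
    have n2ye : ∀ t, add (neg y) (add y (add (neg y) t)) = add (neg y) t := by
      intro t
      have ht : add (add (add (neg y) y) (neg y)) t = add (neg y) t := by rw [hneg₂ y]
      simpa only [haddassoc] using ht
    have c1 : add (add (add x y) (add (neg y) (neg x))) (add x y) = add x y := by
      simp only [haddassoc]
      rw [comme y, n1y, n1xe y]
    have c2 : add (add (add (neg y) (neg x)) (add x y)) (add (neg y) (neg x))
        = add (neg y) (neg x) := by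
      simp only [haddassoc]
      rw [← comme (neg x), n2x, n2ye (neg x)]
    exact (hneguniq (add x y) (add (neg y) (neg x)) c1 c2).symm
  -- inverse of a product: -(a·b) = (-a + a·(-b)) + (-a)
  have negmul : ∀ a b : S, add (add (neg a) (mul a (neg b))) (neg a) = neg (mul a b) := by
    intro a b
    have c1 : add (add (mul a b) (add (add (neg a) (mul a (neg b))) (neg a))) (mul a b)
        = mul a b := by
      calc add (add (mul a b) (add (add (neg a) (mul a (neg b))) (neg a))) (mul a b)
          = add (add (add (add (mul a b) (neg a)) (mul a (neg b))) (neg a)) (mul a b) := by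
            simp only [haddassoc]
        _ = add (add (mul a (add b (neg b))) (neg a)) (mul a b) := by
            rw [← hdist a b (neg b)]
        _ = mul a (add (add b (neg b)) b) := by rw [← hdist a (add b (neg b)) b]
        _ = mul a b := by rw [hneg₁ b]
    have c2 : add (add (add (add (neg a) (mul a (neg b))) (neg a)) (mul a b))
        (add (add (neg a) (mul a (neg b))) (neg a))
        = add (add (neg a) (mul a (neg b))) (neg a) := by
      calc add (add (add (add (neg a) (mul a (neg b))) (neg a)) (mul a b))
            (add (add (neg a) (mul a (neg b))) (neg a))
          = add (neg a) (add (add (add (mul a (neg b)) (neg a)) (mul a b))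
              (add (add (neg a) (mul a (neg b))) (neg a))) := by simp only [haddassoc]
        _ = add (neg a) (add (mul a (add (neg b) b))
              (add (add (neg a) (mul a (neg b))) (neg a))) := by rw [← hdist a (neg b) b]
        _ = add (neg a) (add (add (add (mul a (add (neg b) b)) (neg a)) (mul a (neg b)))
              (neg a)) := by simp only [haddassoc]
        _ = add (neg a) (add (mul a (add (add (neg b) b) (neg b))) (neg a)) := by
            rw [← hdist a (add (neg b) b) (neg b)]
        _ = add (neg a) (add (mul a (neg b)) (neg a)) := by rw [hneg₂ b]
        _ = add (add (neg a) (mul a (neg b))) (neg a) := by simp only [haddassoc]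
    exact hneguniq (mul a b) (add (add (neg a) (mul a (neg b))) (neg a)) c1 c2
  -- -a + a·(-(a⁻¹)) = -( -a + a·a⁻¹ )
  have qlem : ∀ a : S, add (neg a) (mul a (neg (inv a)))
      = neg (add (neg a) (mul a (inv a))) := by
    intro a
    have c1 : add (add (add (neg a) (mul a (inv a))) (add (neg a) (mul a (neg (inv a)))))
        (add (neg a) (mul a (inv a))) = add (neg a) (mul a (inv a)) := by
      calc add (add (add (neg a) (mul a (inv a))) (add (neg a) (mul a (neg (inv a)))))
            (add (neg a) (mul a (inv a)))
          = add (neg a) (add (add (add (mul a (inv a)) (neg a)) (mul a (neg (inv a))))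
              (add (neg a) (mul a (inv a)))) := by simp only [haddassoc]
        _ = add (neg a) (add (mul a (add (inv a) (neg (inv a))))
              (add (neg a) (mul a (inv a)))) := by rw [← hdist a (inv a) (neg (inv a))]
        _ = add (neg a) (add (add (mul a (add (inv a) (neg (inv a)))) (neg a))
              (mul a (inv a))) := by simp only [haddassoc]
        _ = add (neg a) (mul a (add (add (inv a) (neg (inv a))) (inv a))) := by
            rw [← hdist a (add (inv a) (neg (inv a))) (inv a)]
        _ = add (neg a) (mul a (inv a)) := by rw [hneg₁ (inv a)]
    have c2 : add (add (add (neg a) (mul a (neg (inv a)))) (add (neg a) (mul a (inv a))))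
        (add (neg a) (mul a (neg (inv a)))) = add (neg a) (mul a (neg (inv a))) := by
      calc add (add (add (neg a) (mul a (neg (inv a)))) (add (neg a) (mul a (inv a))))
            (add (neg a) (mul a (neg (inv a))))
          = add (neg a) (add (add (add (mul a (neg (inv a))) (neg a)) (mul a (inv a)))
              (add (neg a) (mul a (neg (inv a))))) := by simp only [haddassoc]
        _ = add (neg a) (add (mul a (add (neg (inv a)) (inv a)))
              (add (neg a) (mul a (neg (inv a))))) := by rw [← hdist a (neg (inv a)) (inv a)]
        _ = add (neg a) (add (add (mul a (add (neg (inv a)) (inv a))) (neg a))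
              (mul a (neg (inv a)))) := by simp only [haddassoc]
        _ = add (neg a) (mul a (add (add (neg (inv a)) (inv a)) (neg (inv a)))) := by
            rw [← hdist a (add (neg (inv a)) (inv a)) (neg (inv a))]
        _ = add (neg a) (mul a (neg (inv a))) := by rw [hneg₂ (inv a)]
    exact hneguniq (add (neg a) (mul a (inv a))) (add (neg a) (mul a (neg (inv a)))) c1 c2
  -- key identity: (-a + a) + (a + -a) = -a + a
  have keylem : ∀ a : S, add (add (neg a) a) (add a (neg a)) = add (neg a) a := by
    intro a
    have h : add (neg a) a = add (add (neg a) a) (add a (neg a)) := by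
      calc add (neg a) a
          = neg (add (neg a) a) := (idem_neg (add (neg a) a) (idem_f a)).symm
        _ = neg (mul a (inv a)) := by rw [hbrace a]
        _ = add (add (neg a) (mul a (neg (inv a)))) (neg a) := (negmul a (inv a)).symm
        _ = add (neg (add (neg a) (mul a (inv a)))) (neg a) := by rw [qlem a]
        _ = add (neg (add (neg a) (add (neg a) a))) (neg a) := by rw [hbrace a]
        _ = add (add (neg (add (neg a) a)) (neg (neg a))) (neg a) := by
            rw [negadd (neg a) (add (neg a) a)]
        _ = add (add (add (neg a) a) a) (neg a) := by
            rw [idem_neg (add (neg a) a) (idem_f a), negneg a]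
        _ = add (add (neg a) a) (add a (neg a)) := by simp only [haddassoc]
    exact h.symm
  -- conclude
  intro a
  have k1 := keylem a
  have k2 := keylem (neg a)
  rw [negneg a] at k2
  have hc := comm_idem (add a (neg a)) (add (neg a) a) (idem_e a) (idem_f a)
  calc add (neg a) a
      = add (add (neg a) a) (add a (neg a)) := k1.symm
    _ = add (add a (neg a)) (add (neg a) a) := hc.symm
    _ = add a (neg a) := k2
end

section
/- In a weak left brace (S,+,·), for every idempotent e and every a ∈ S one has e·a = e + a = a + e. -/
namespace WLBAux

variable {S : Type*}

theorem iv_iv {op : S → S → S} {iv : S → S}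
    (h1 : ∀ a : S, op (op a (iv a)) a = a)
    (h2 : ∀ a : S, op (op (iv a) a) (iv a) = iv a)
    (huniq : ∀ a b : S, op (op a b) a = a → op (op b a) b = b → b = iv a)
    (a : S) : iv (iv a) = a :=
  (huniq (iv a) a (h2 a) (h1 a)).symm

theorem idem_iv {op : S → S → S} {iv : S → S}
    (huniq : ∀ a b : S, op (op a b) a = a → op (op b a) b = b → b = iv a)
    {e : S} (he : op e e = e) : iv e = e :=
  (huniq e e (by rw [he, he]) (by rw [he, he])).symm

theorem idem_prod {op : S → S → S} {iv : S → S}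
    (hassoc : ∀ a b c : S, op (op a b) c = op a (op b c))
    (h1 : ∀ a : S, op (op a (iv a)) a = a)
    (h2 : ∀ a : S, op (op (iv a) a) (iv a) = iv a)
    (huniq : ∀ a b : S, op (op a b) a = a → op (op b a) b = b → b = iv a)
    {e f : S} (he : op e e = e) (hf : op f f = f) :
    op (op e f) (op e f) = op e f := by
  have heC : ∀ t, op e (op e t) = op e t := fun t => by rw [← hassoc, he]
  have hfC : ∀ t, op f (op f t) = op f t := fun t => by rw [← hassoc, hf]
  obtain ⟨x, hx⟩ : ∃ x, iv (op e f) = x := ⟨_, rfl⟩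
  have h1p : op (op (op e f) x) (op e f) = op e f := by rw [← hx]; exact h1 _
  have h2p : op (op x (op e f)) x = x := by rw [← hx]; exact h2 _
  have h2p' : op x (op e (op f x)) = x := by
    have := h2p; simp only [hassoc] at this; exact this
  have h3 : op x (op e (op f (op x e))) = op x e := by
    have := congrArg (fun z => op z e) h2p'
    simpa only [hassoc] using this
  have c1 : op f (op x e) = x := by
    have c1' : op f (op x e) = iv (op e f) := by
      refine huniq (op e f) (op f (op x e)) ?_ ?_
      · have h := h1p
        simp only [hassoc] at h ⊢
        rw [hfC, heC]
        exact h
      · simp only [hassoc]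
        rw [heC, hfC, h3]
    rw [c1', hx]
  have cx : op x x = x := by
    calc op x x = op (op f (op x e)) (op f (op x e)) := by rw [c1]
    _ = x := by
        simp only [hassoc]
        rw [h3]
        exact c1
  have hefx : op e f = x := by
    have h4 : op e f = iv x := huniq x (op e f) h2p h1p
    rw [h4, idem_iv huniq cx]
  rw [hefx]; exact cx

theorem idem_comm {op : S → S → S} {iv : S → S}
    (hassoc : ∀ a b c : S, op (op a b) c = op a (op b c))
    (h1 : ∀ a : S, op (op a (iv a)) a = a)
    (h2 : ∀ a : S, op (op (iv a) a) (iv a) = iv a)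
    (huniq : ∀ a b : S, op (op a b) a = a → op (op b a) b = b → b = iv a)
    {e f : S} (he : op e e = e) (hf : op f f = f) :
    op e f = op f e := by
  have heC : ∀ t, op e (op e t) = op e t := fun t => by rw [← hassoc, he]
  have hfC : ∀ t, op f (op f t) = op f t := fun t => by rw [← hassoc, hf]
  have hef := idem_prod hassoc h1 h2 huniq he hf
  have hfe := idem_prod hassoc h1 h2 huniq hf he
  have key : op f e = iv (op e f) := by
    refine huniq (op e f) (op f e) ?_ ?_
    · have h := hef; simp only [hassoc] at h ⊢
      rw [hfC, heC]; exact h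
    · have h := hfe; simp only [hassoc] at h ⊢
      rw [heC, hfC]; exact h
  rw [key, idem_iv huniq hef]

end WLBAux


namespace WLBAux2

variable {S : Type*}

theorem antihom {op : S → S → S} {iv : S → S}
    (hassoc : ∀ a b c : S, op (op a b) c = op a (op b c))
    (h1 : ∀ a : S, op (op a (iv a)) a = a)
    (h2 : ∀ a : S, op (op (iv a) a) (iv a) = iv a)
    (huniq : ∀ a b : S, op (op a b) a = a → op (op b a) b = b → b = iv a)
    (a b : S) : iv (op a b) = op (iv b) (iv a) := by
  have hEb : op (op b (iv b)) (op b (iv b)) = op b (iv b) := by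
    rw [← hassoc, h1]
  have hFa : op (op (iv a) a) (op (iv a) a) = op (iv a) a := by
    rw [← hassoc, h2]
  have comm_uv : op (op b (iv b)) (op (iv a) a) = op (op (iv a) a) (op b (iv b)) :=
    WLBAux.idem_comm hassoc h1 h2 huniq hEb hFa
  have sub1 : op (op (op a b) (op (iv b) (iv a))) (op a b) = op a b := by
    have e1 : op (op (op a b) (op (iv b) (iv a))) (op a b)
        = op a (op (op (op b (iv b)) (op (iv a) a)) b) := by
      simp only [hassoc]
    rw [e1, comm_uv, hassoc (op (iv a) a) (op b (iv b)) b, h1 b,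
      hassoc (iv a) a b, ← hassoc a (iv a) (op a b), ← hassoc (op a (iv a)) a b, h1 a]
  have sub2 : op (op (op (iv b) (iv a)) (op a b)) (op (iv b) (iv a)) = op (iv b) (iv a) := by
    have e2 : op (op (op (iv b) (iv a)) (op a b)) (op (iv b) (iv a))
        = op (iv b) (op (op (op (iv a) a) (op b (iv b))) (iv a)) := by
      simp only [hassoc]
    rw [e2, ← comm_uv, hassoc (op b (iv b)) (op (iv a) a) (iv a), h2 a,
      ← hassoc (iv b) (op b (iv b)) (iv a), ← hassoc (iv b) b (iv b), h2 b]
  exact (huniq (op a b) (op (iv b) (iv a)) sub1 sub2).symm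

end WLBAux2
structure WLB (S : Type*) where
  add : S → S → S
  mul : S → S → S
  neg : S → S
  inv : S → S
  addassoc : ∀ a b c : S, add (add a b) c = add a (add b c)
  mulassoc : ∀ a b c : S, mul (mul a b) c = mul a (mul b c)
  neg₁ : ∀ a : S, add (add a (neg a)) a = a
  neg₂ : ∀ a : S, add (add (neg a) a) (neg a) = neg a
  neguniq : ∀ a b : S, add (add a b) a = a → add (add b a) b = b → b = neg a
  inv₁ : ∀ a : S, mul (mul a (inv a)) a = a
  inv₂ : ∀ a : S, mul (mul (inv a) a) (inv a) = inv a
  invuniq : ∀ a b : S, mul (mul a b) a = a → mul (mul b a) b = b → b = inv a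
  dist : ∀ x y z : S, mul x (add y z) = add (add (mul x y) (neg x)) (mul x z)
  brace : ∀ x : S, mul x (inv x) = add (neg x) x

namespace WLB

variable {S : Type*} (W : WLB S)

theorem negneg (a : S) : W.neg (W.neg a) = a :=
  WLBAux.iv_iv W.neg₁ W.neg₂ W.neguniq a

theorem addIdemNeg {e : S} (he : W.add e e = e) : W.neg e = e :=
  WLBAux.idem_iv W.neguniq he

theorem mulIdemInv {e : S} (he : W.mul e e = e) : W.inv e = e :=
  WLBAux.idem_iv W.invuniq he

theorem addIdemComm {e f : S} (he : W.add e e = e) (hf : W.add f f = f) :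
    W.add e f = W.add f e :=
  WLBAux.idem_comm W.addassoc W.neg₁ W.neg₂ W.neguniq he hf

theorem mulIdemComm {e f : S} (he : W.mul e e = e) (hf : W.mul f f = f) :
    W.mul e f = W.mul f e :=
  WLBAux.idem_comm W.mulassoc W.inv₁ W.inv₂ W.invuniq he hf

theorem addAntihom (a b : S) : W.neg (W.add a b) = W.add (W.neg b) (W.neg a) :=
  WLBAux2.antihom W.addassoc W.neg₁ W.neg₂ W.neguniq a b

theorem mulAntihom (a b : S) : W.inv (W.mul a b) = W.mul (W.inv b) (W.inv a) :=
  WLBAux2.antihom W.mulassoc W.inv₁ W.inv₂ W.invuniq a b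

/-- `x + (-x + x) = x`. -/
theorem absorb1 (x : S) : W.add x (W.add (W.neg x) x) = x := by
  rw [← W.addassoc, W.neg₁]

/-- `-x + (x + -x) = -x`. -/
theorem absorb2 (x : S) : W.add (W.neg x) (W.add x (W.neg x)) = W.neg x := by
  rw [← W.addassoc, W.neg₂]

/-- additive idempotent implies multiplicative idempotent -/
theorem B1 {e : S} (he : W.add e e = e) : W.mul e e = e := by
  have h := W.brace e
  rw [W.addIdemNeg he, he] at h
  have h2 := W.inv₁ e
  rw [h] at h2
  exact h2

/-- multiplicative idempotent implies additive idempotent -/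
theorem B2 {e : S} (he : W.mul e e = e) : W.add e e = e := by
  have hi := W.mulIdemInv he
  have h := W.brace e
  rw [hi, he] at h
  calc W.add e e = W.add (W.add (W.neg e) e) (W.add (W.neg e) e) := by rw [← h]
    _ = W.add (W.neg e) (W.add e (W.add (W.neg e) e)) := W.addassoc _ _ _
    _ = W.add (W.neg e) e := by rw [W.absorb1]
    _ = e := h.symm

/-- distributivity for an additive idempotent -/
theorem distE {e : S} (he : W.add e e = e) (y z : S) :
    W.mul e (W.add y z) = W.add (W.mul e y) (W.add e (W.mul e z)) := by
  rw [W.dist, W.addIdemNeg he, W.addassoc]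

/-- idempotent of `-a + a` -/
theorem idemF (a : S) : W.add (W.add (W.neg a) a) (W.add (W.neg a) a) = W.add (W.neg a) a := by
  rw [W.addassoc, W.absorb1]

/-- idempotent of `a + -a` -/
theorem idemF' (a : S) : W.add (W.add a (W.neg a)) (W.add a (W.neg a)) = W.add a (W.neg a) := by
  rw [W.addassoc, W.absorb2]

end WLB
namespace WLB

variable {S : Type*} (W : WLB S)

theorem addIdemSum {e f : S} (he : W.add e e = e) (hf : W.add f f = f) :
    W.add (W.add e f) (W.add e f) = W.add e f := by
  calc W.add (W.add e f) (W.add e f) = W.add e (W.add f (W.add e f)) := by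
        simp only [W.addassoc]
    _ = W.add e (W.add e (W.add f f)) := by
        rw [← W.addassoc f e f, W.addIdemComm hf he, W.addassoc]
    _ = W.add e f := by rw [hf, ← W.addassoc, he]

theorem J {e f : S} (he : W.add e e = e) (hf : W.add f f = f) :
    W.mul e f = W.add e f := by
  have heM := W.B1 he
  have hfM := W.B1 hf
  have j2 : ∀ u v : S, W.add u u = u → W.add v v = v →
      W.add (W.mul u v) u = W.mul u v := by
    intro u v hu hv
    have huv : W.add (W.mul u v) (W.mul u v) = W.mul u v :=
      W.B2 (WLBAux.idem_prod W.mulassoc W.inv₁ W.inv₂ W.invuniq (W.B1 hu) (W.B1 hv))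
    have E := W.distE hu v v
    rw [hv] at E
    rw [W.addIdemComm hu huv, ← W.addassoc, huv] at E
    exact E.symm
  have j2' : ∀ u v : S, W.add u u = u → W.add v v = v →
      W.add u (W.mul u v) = W.mul u v := by
    intro u v hu hv
    have huv : W.add (W.mul u v) (W.mul u v) = W.mul u v :=
      W.B2 (WLBAux.idem_prod W.mulassoc W.inv₁ W.inv₂ W.invuniq (W.B1 hu) (W.B1 hv))
    rw [W.addIdemComm hu huv]
    exact j2 u v hu hv
  obtain ⟨h, hhdef⟩ : ∃ h, W.add e f = h := ⟨_, rfl⟩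
  have hh : W.add h h = h := by rw [← hhdef]; exact W.addIdemSum he hf
  have hhM := W.B1 hh
  have j5 : h = W.add (W.mul h e) (W.mul h f) := by
    have E := W.distE hh e f
    rw [hhdef, hhM, j2' h f hh hf] at E
    exact E
  have hheIdem : W.add (W.mul h e) (W.mul h e) = W.mul h e :=
    W.B2 (WLBAux.idem_prod W.mulassoc W.inv₁ W.inv₂ W.invuniq hhM heM)
  have j6 : W.mul h e = h := by
    have step : W.add (W.mul h e) h = W.add (W.mul h e) (W.add (W.mul h e) (W.mul h f)) := by
      rw [← j5]
    rw [← W.addassoc, hheIdem, ← j5] at step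
    exact (j2 h e hh he).symm.trans step
  have j7 : W.mul e h = W.mul e f := by
    have E := W.distE he e f
    rw [W.B1 he, ← W.addassoc, he, j2' e f he hf, hhdef] at E
    exact E
  have j8 : W.mul e h = W.mul h e := W.mulIdemComm (W.B1 he) hhM
  calc W.mul e f = W.mul e h := j7.symm
    _ = W.mul h e := j8
    _ = h := j6
    _ = W.add e f := hhdef.symm

end WLB
namespace WLB

variable {S : Type*} (W : WLB S)

theorem goalA (a : S) : W.add (W.mul a (W.inv a)) a = a := by
  obtain ⟨F, hFdef⟩ : ∃ F, W.mul a (W.inv a) = F := ⟨_, rfl⟩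
  have hFrep : F = W.add (W.neg a) a := by rw [← hFdef, W.brace]
  have hFidem : W.add F F = F := by rw [hFrep]; exact W.idemF a
  have hFa : W.mul F a = a := by rw [← hFdef]; exact W.inv₁ a
  obtain ⟨s, hsdef⟩ : ∃ s, W.mul F (W.neg a) = s := ⟨_, rfl⟩
  have M10 : W.add a (W.add F (W.add s (W.add F a))) = a := by
    have d1 : W.mul F (W.add (W.add a (W.neg a)) a) = a := by rw [W.neg₁, hFa]
    have d2 : W.mul F (W.add (W.add a (W.neg a)) a)
        = W.add a (W.add F (W.add s (W.add F a))) := by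
      rw [W.distE hFidem, W.distE hFidem, hFa, hsdef]
      simp only [W.addassoc]
    rw [← d2, d1]
  have M9 : W.add s (W.add F (W.add a (W.add F s))) = s := by
    have d3 : W.mul F (W.add (W.add (W.neg a) a) (W.neg a)) = s := by rw [W.neg₂, hsdef]
    have d4 : W.mul F (W.add (W.add (W.neg a) a) (W.neg a))
        = W.add s (W.add F (W.add a (W.add F s))) := by
      rw [W.distE hFidem, W.distE hFidem, hFa, hsdef]
      simp only [W.addassoc]
    rw [← d4, d3]
  have M9C : ∀ t, W.add s (W.add F (W.add a (W.add F (W.add s t)))) = W.add s t := by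
    intro t
    have := congrArg (fun z => W.add z t) M9
    simpa only [W.addassoc] using this
  have hb : W.add F (W.add s F) = W.neg a := by
    refine W.neguniq a (W.add F (W.add s F)) ?_ ?_
    · simp only [W.addassoc]; exact M10
    · simp only [W.addassoc]
      rw [M9C F]
  have hFC : ∀ t, W.add F (W.add F t) = W.add F t := fun t => by
    rw [← W.addassoc, hFidem]
  have R2b : W.add (W.neg a) F = W.neg a := by
    rw [← hb]
    simp only [W.addassoc]
    rw [hFidem]
  have R3 := congrArg W.neg R2b
  rw [W.addAntihom, W.negneg, W.addIdemNeg hFidem] at R3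
  rw [hFdef]
  exact R3

theorem goalA' (a : S) : W.add (W.add (W.neg a) a) a = a := by
  have := W.goalA a
  rwa [W.brace] at this

theorem cliff (a : S) : W.add a (W.neg a) = W.add (W.neg a) a := by
  have h1 : W.add (W.add a (W.neg a)) (W.neg a) = W.neg a := by
    have := W.goalA' (W.neg a)
    rwa [W.negneg] at this
  have h5 : W.add (W.add a (W.neg a)) (W.add (W.neg a) a) = W.add (W.neg a) a := by
    rw [← W.addassoc, h1]
  have h6 : W.add (W.add (W.neg a) a) (W.add a (W.neg a)) = W.add a (W.neg a) := by
    rw [← W.addassoc, W.goalA']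
  calc W.add a (W.neg a) = W.add (W.add (W.neg a) a) (W.add a (W.neg a)) := h6.symm
    _ = W.add (W.add a (W.neg a)) (W.add (W.neg a) a) :=
        W.addIdemComm (W.idemF a) (W.idemF' a)
    _ = W.add (W.neg a) a := h5

theorem centr {e : S} (he : W.add e e = e) (x : S) : W.add e x = W.add x e := by
  have hne := W.addIdemNeg he
  have heC : ∀ t, W.add e (W.add e t) = W.add e t := fun t => by rw [← W.addassoc, he]
  have negX : W.neg (W.add e x) = W.add (W.neg x) e := by rw [W.addAntihom, hne]
  have C1 : W.add (W.neg x) (W.add e x) = W.add e (W.add x (W.add (W.neg x) e)) := by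
    have h := (W.cliff (W.add e x)).symm
    rw [negX] at h
    simpa only [W.addassoc, heC] using h
  calc W.add e x
      = W.add e (W.add x (W.add (W.neg x) x)) := by rw [W.absorb1]
    _ = W.add e (W.add (W.add x (W.neg x)) x) := by rw [W.addassoc]
    _ = W.add (W.add e (W.add x (W.neg x))) x := (W.addassoc _ _ _).symm
    _ = W.add (W.add (W.add x (W.neg x)) e) x := by rw [W.addIdemComm he (W.idemF' x)]
    _ = W.add (W.add x (W.neg x)) (W.add e x) := W.addassoc _ _ _
    _ = W.add x (W.add (W.neg x) (W.add e x)) := W.addassoc _ _ _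
    _ = W.add x (W.add e (W.add x (W.add (W.neg x) e))) := by rw [C1]
    _ = W.add x (W.add e (W.add (W.add x (W.neg x)) e)) := by rw [W.addassoc]
    _ = W.add x (W.add e (W.add (W.add (W.neg x) x) e)) := by rw [W.cliff]
    _ = W.add x (W.add (W.add e (W.add (W.neg x) x)) e) := by
        rw [W.addassoc e (W.add (W.neg x) x) e]
    _ = W.add x (W.add (W.add (W.add (W.neg x) x) e) e) := by
        rw [W.addIdemComm he (W.idemF x)]
    _ = W.add x (W.add (W.add (W.neg x) x) (W.add e e)) := by
        rw [W.addassoc (W.add (W.neg x) x) e e]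
    _ = W.add x (W.add (W.add (W.neg x) x) e) := by rw [he]
    _ = W.add (W.add x (W.add (W.neg x) x)) e := (W.addassoc _ _ _).symm
    _ = W.add x e := by rw [W.absorb1]

end WLB
namespace WLB

variable {S : Type*} (W : WLB S)

theorem main1 {e : S} (he : W.add e e = e) (a : S) : W.mul e a = W.add e a := by
  obtain ⟨F, hFdef⟩ : ∃ F, W.mul a (W.inv a) = F := ⟨_, rfl⟩
  have hFrep : F = W.add (W.neg a) a := by rw [← hFdef, W.brace]
  have hFidem : W.add F F = F := by rw [hFrep]; exact W.idemF a
  have hFa : W.mul F a = a := by rw [← hFdef]; exact W.inv₁ a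
  have hFabs : W.add F a = a := by rw [← hFdef]; exact W.goalA a
  obtain ⟨g, hgdef⟩ : ∃ g, W.add e F = g := ⟨_, rfl⟩
  have hg : W.add g g = g := by rw [← hgdef]; exact W.addIdemSum he hFidem
  have hgC : ∀ t, W.add g (W.add g t) = W.add g t := fun t => by rw [← W.addassoc, hg]
  have hgF_add : W.add g F = g := by rw [← hgdef, W.addassoc, hFidem]
  have hFg_add : W.add F g = g := by
    rw [← hgdef, ← W.addassoc, W.addIdemComm hFidem he, W.addassoc, hFidem]
  have hJeF : W.mul e F = g := by rw [W.J he hFidem, hgdef]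
  have hJgF : W.mul g F = g := by rw [W.J hg hFidem, hgF_add]
  have egaM : W.mul e a = W.mul g a := by
    calc W.mul e a = W.mul e (W.mul F a) := by rw [hFa]
      _ = W.mul (W.mul e F) a := (W.mulassoc _ _ _).symm
      _ = W.mul g a := by rw [hJeF]
  have egaA : W.add e a = W.add g a := by
    calc W.add e a = W.add e (W.add F a) := by rw [hFabs]
      _ = W.add (W.add e F) a := (W.addassoc _ _ _).symm
      _ = W.add g a := by rw [hgdef]
  have hgM : W.mul g g = g := W.B1 hg
  have hgI : W.inv g = g := W.mulIdemInv hgM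
  have hgN : W.neg g = g := W.addIdemNeg hg
  have hinvc : W.inv (W.mul g a) = W.mul (W.inv a) g := by rw [W.mulAntihom, hgI]
  have hcc : W.mul (W.mul g a) (W.inv (W.mul g a)) = g := by
    rw [hinvc]
    calc W.mul (W.mul g a) (W.mul (W.inv a) g)
        = W.mul g (W.mul (W.mul a (W.inv a)) g) := by simp only [W.mulassoc]
      _ = W.mul g (W.mul F g) := by rw [hFdef]
      _ = W.mul (W.mul g F) g := (W.mulassoc _ _ _).symm
      _ = g := by rw [hJgF, hgM]
  have hgc : W.add g (W.mul g a) = W.mul g a := by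
    have h := W.goalA (W.mul g a)
    rwa [hcc] at h
  have hnegd : W.neg (W.add g a) = W.add (W.neg a) g := by rw [W.addAntihom, hgN]
  have hdd : W.add (W.neg (W.add g a)) (W.add g a) = g := by
    rw [hnegd]
    calc W.add (W.add (W.neg a) g) (W.add g a)
        = W.add (W.neg a) (W.add g (W.add g a)) := by simp only [W.addassoc]
      _ = W.add (W.neg a) (W.add g a) := by rw [hgC]
      _ = W.add (W.neg a) (W.add a g) := by rw [W.centr hg a]
      _ = W.add (W.add (W.neg a) a) g := (W.addassoc _ _ _).symm
      _ = W.add F g := by rw [← hFrep]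
      _ = g := hFg_add
  have braceD : W.mul (W.add g a) (W.inv (W.add g a)) = g := by
    rw [W.brace]; exact hdd
  have hgd : W.mul g (W.add g a) = W.add g a := by
    have h := W.inv₁ (W.add g a)
    rwa [braceD] at h
  have hgd2 : W.mul g (W.add g a) = W.mul g a := by
    rw [W.distE hg, hgM, hgC, hgc]
  have key : W.mul g a = W.add g a := hgd2.symm.trans hgd
  rw [egaM, egaA]
  exact key

end WLB

/-- In a weak left brace `(S,+,·)`, for every idempotent `e` and every `a`,
`e·a = e + a = a + e`. -/
theorem weak_left_brace_idempotent_action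
    {S : Type*} (add mul : S → S → S) (neg inv : S → S)
    (haddassoc : ∀ a b c : S, add (add a b) c = add a (add b c))
    (hmulassoc : ∀ a b c : S, mul (mul a b) c = mul a (mul b c))
    (hneg₁ : ∀ a : S, add (add a (neg a)) a = a)
    (hneg₂ : ∀ a : S, add (add (neg a) a) (neg a) = neg a)
    (hneguniq : ∀ a b : S, add (add a b) a = a → add (add b a) b = b → b = neg a)
    (hinv₁ : ∀ a : S, mul (mul a (inv a)) a = a)
    (hinv₂ : ∀ a : S, mul (mul (inv a) a) (inv a) = inv a)
    (hinvuniq : ∀ a b : S, mul (mul a b) a = a → mul (mul b a) b = b → b = inv a)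
    (hdist : ∀ x y z : S, mul x (add y z) = add (add (mul x y) (neg x)) (mul x z))
    (hbrace : ∀ x : S, mul x (inv x) = add (neg x) x) :
    ∀ e a : S, add e e = e → mul e a = add e a ∧ add e a = add a e := by
  intro e a he
  let W : WLB S :=
    ⟨add, mul, neg, inv, haddassoc, hmulassoc, hneg₁, hneg₂, hneguniq,
      hinv₁, hinv₂, hinvuniq, hdist, hbrace⟩
  exact ⟨W.main1 he a, W.centr he a⟩
end

section
/- In a weak left brace (S,+,·), λ_{a·b} = λ_a ∘ λ_b for all a, b, where λ_a(c) = -a + a·c; that is, -a·b + a·b·c = -a + a·(-b + b·c) for all a, b, c. -/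
/-- In a weak left brace `(S,+,·)`, `λ_{a·b} = λ_a ∘ λ_b` where `λ_a(c) = -a + a·c`. -/
theorem weak_left_brace_lambda_multiplicative
    {S : Type*} (add mul : S → S → S) (neg inv : S → S)
    (haddassoc : ∀ a b c : S, add (add a b) c = add a (add b c))
    (hmulassoc : ∀ a b c : S, mul (mul a b) c = mul a (mul b c))
    (hneg₁ : ∀ a : S, add (add a (neg a)) a = a)
    (hneg₂ : ∀ a : S, add (add (neg a) a) (neg a) = neg a)
    (hneguniq : ∀ a b : S, add (add a b) a = a → add (add b a) b = b → b = neg a)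
    (hinv₁ : ∀ a : S, mul (mul a (inv a)) a = a)
    (hinv₂ : ∀ a : S, mul (mul (inv a) a) (inv a) = inv a)
    (hinvuniq : ∀ a b : S, mul (mul a b) a = a → mul (mul b a) b = b → b = inv a)
    (hdist : ∀ x y z : S, mul x (add y z) = add (add (mul x y) (neg x)) (mul x z))
    (hbrace : ∀ x : S, mul x (inv x) = add (neg x) x) :
    ∀ a b c : S,
      add (neg (mul a b)) (mul (mul a b) c) =
        add (neg a) (mul a (add (neg b) (mul b c))) := by
  have hdist' : ∀ x y z w : S,
      add (mul x (add y z)) w = add (mul x y) (add (neg x) (add (mul x z) w)) := by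
    intro x y z w
    rw [hdist]
    simp only [haddassoc]
  intro a b c
  set z := add (add (neg a) (mul a (neg b))) (neg a) with hz
  have h1 : add (mul a b) z = add (mul a (add b (neg b))) (neg a) := by
    rw [hz, hdist]
    simp only [haddassoc]
  have h2 : add (add (mul a b) z) (mul a b) = mul a b := by
    rw [h1, ← hdist a (add b (neg b)) b, hneg₁]
  have h3 : add z (mul a b) = add (neg a) (mul a (add (neg b) b)) := by
    rw [hz, hdist]
    simp only [haddassoc]
  have h4 : add (add z (mul a b)) z = z := by
    rw [h3, hz]
    simp only [haddassoc]
    rw [← hdist' a (add (neg b) b) (neg b) (neg a)]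
    rw [show add (add (neg b) b) (neg b) = neg b from hneg₂ b]
  have hzneg : z = neg (mul a b) := hneguniq (mul a b) z h2 h4
  rw [← hzneg, hmulassoc, hdist a (neg b) (mul b c), hz]
  simp only [haddassoc]
end

section
/- Let (S,+) and (S,·) be inverse semigroups on the same set. Then the distributivity law x·(y+z) = x·y - x + x·z holds for all x,y,z if and only if both (i) each λ_x, defined by λ_x(y) = -x + x·y, is an endomorphism of (S,+), and (ii) λ_{x·y} = λ_x ∘ λ_y for all x, y. -/
namespace DistribAux

variable {S : Type*}

theorem negneg (add : S → S → S) (neg : S → S)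
    (h1 : ∀ a : S, add (add a (neg a)) a = a)
    (h2 : ∀ a : S, add (add (neg a) a) (neg a) = neg a)
    (huniq : ∀ a b : S, add (add a b) a = a → add (add b a) b = b → b = neg a)
    (a : S) : neg (neg a) = a :=
  (huniq (neg a) a (h2 a) (h1 a)).symm

theorem idem_neg (add : S → S → S) (neg : S → S)
    (huniq : ∀ a b : S, add (add a b) a = a → add (add b a) b = b → b = neg a)
    {e : S} (he : add e e = e) : neg e = e :=
  (huniq e e (by rw [he, he]) (by rw [he, he])).symm

theorem m1 (add : S → S → S) (neg : S → S)
    (hassoc : ∀ a b c : S, add (add a b) c = add a (add b c))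
    (h1 : ∀ a : S, add (add a (neg a)) a = a)
    (t a : S) : add (add (add t a) (neg a)) a = add t a := by
  rw [hassoc (add t a) (neg a) a, hassoc t a (add (neg a) a),
    ← hassoc a (neg a) a, h1 a]

theorem m2 (add : S → S → S) (neg : S → S)
    (hassoc : ∀ a b c : S, add (add a b) c = add a (add b c))
    (h2 : ∀ a : S, add (add (neg a) a) (neg a) = neg a)
    (t a : S) : add (add (add t (neg a)) a) (neg a) = add t (neg a) := by
  rw [hassoc (add t (neg a)) a (neg a), hassoc t (neg a) (add a (neg a)),
    ← hassoc (neg a) a (neg a), h2 a]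

theorem mdup (add : S → S → S)
    (hassoc : ∀ a b c : S, add (add a b) c = add a (add b c))
    {f : S} (hf : add f f = f) (t : S) : add (add t f) f = add t f := by
  rw [hassoc t f f, hf]

theorem sum_idem (add : S → S → S) (neg : S → S)
    (hassoc : ∀ a b c : S, add (add a b) c = add a (add b c))
    (h1 : ∀ a : S, add (add a (neg a)) a = a)
    (h2 : ∀ a : S, add (add (neg a) a) (neg a) = neg a)
    (huniq : ∀ a b : S, add (add a b) a = a → add (add b a) b = b → b = neg a)
    {e f : S} (he : add e e = e) (hf : add f f = f) :
    add (add e f) (add e f) = add e f ∧ neg (add e f) = add e f := by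
  have hbb : add (add f (neg (add e f))) e = neg (add e f) := by
    apply huniq
    · simp only [← hassoc]
      rw [mdup add hassoc hf e, mdup add hassoc he (add (add e f) (neg (add e f))),
        hassoc (add (add e f) (neg (add e f))) e f]
      exact h1 (add e f)
    · simp only [← hassoc]
      rw [mdup add hassoc he (add f (neg (add e f))),
        mdup add hassoc hf (add (add f (neg (add e f))) e),
        hassoc (add f (neg (add e f))) e f,
        hassoc f (neg (add e f)) (add e f),
        hassoc f (add (neg (add e f)) (add e f)) (neg (add e f)),
        h2 (add e f)]
  have hbidem : add (add (add f (neg (add e f))) e) (add (add f (neg (add e f))) e)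
      = add (add f (neg (add e f))) e := by
    simp only [← hassoc]
    rw [hassoc (add f (neg (add e f))) e f, hassoc f (neg (add e f)) (add e f),
      hassoc f (add (neg (add e f)) (add e f)) (neg (add e f)), h2 (add e f)]
  have hxx : add (neg (add e f)) (neg (add e f)) = neg (add e f) := by
    rw [← hbb]; exact hbidem
  have hneg_u : neg (add e f) = add e f :=
    ((negneg add neg h1 h2 huniq (add e f)).symm.trans
      (idem_neg add neg huniq hxx)).symm
  refine ⟨?_, hneg_u⟩
  rw [← hneg_u]
  exact hxx

theorem idem_comm (add : S → S → S) (neg : S → S)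
    (hassoc : ∀ a b c : S, add (add a b) c = add a (add b c))
    (h1 : ∀ a : S, add (add a (neg a)) a = a)
    (h2 : ∀ a : S, add (add (neg a) a) (neg a) = neg a)
    (huniq : ∀ a b : S, add (add a b) a = a → add (add b a) b = b → b = neg a)
    {e f : S} (he : add e e = e) (hf : add f f = f) : add e f = add f e := by
  obtain ⟨hu, hnu⟩ := sum_idem add neg hassoc h1 h2 huniq he hf
  obtain ⟨hv, hnv⟩ := sum_idem add neg hassoc h1 h2 huniq hf he
  have hfe : add f e = neg (add e f) := by
    apply huniq
    · simp only [← hassoc]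
      rw [mdup add hassoc hf e, mdup add hassoc he (add e f),
        hassoc (add e f) e f]
      exact hu
    · simp only [← hassoc]
      rw [mdup add hassoc he f, mdup add hassoc hf (add f e),
        hassoc (add f e) f e]
      exact hv
  exact (hfe.trans hnu).symm

theorem neg_add (add : S → S → S) (neg : S → S)
    (hassoc : ∀ a b c : S, add (add a b) c = add a (add b c))
    (h1 : ∀ a : S, add (add a (neg a)) a = a)
    (h2 : ∀ a : S, add (add (neg a) a) (neg a) = neg a)
    (huniq : ∀ a b : S, add (add a b) a = a → add (add b a) b = b → b = neg a)
    (a b : S) : neg (add a b) = add (neg b) (neg a) := by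
  have hi1 : add (add b (neg b)) (add b (neg b)) = add b (neg b) := by
    rw [← hassoc (add b (neg b)) b (neg b), h1 b]
  have hi2 : add (add (neg a) a) (add (neg a) a) = add (neg a) a := by
    rw [← hassoc (add (neg a) a) (neg a) a, h2 a]
  have hc := idem_comm add neg hassoc h1 h2 huniq hi1 hi2
  symm
  apply huniq
  · calc add (add (add a b) (add (neg b) (neg a))) (add a b)
        = add a (add (add (add b (neg b)) (add (neg a) a)) b) := by simp only [hassoc]
      _ = add a (add (add (add (neg a) a) (add b (neg b))) b) := by rw [hc]
      _ = add a b := by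
          simp only [← hassoc]
          rw [h1 a, m1 add neg hassoc h1 a b]
  · calc add (add (add (neg b) (neg a)) (add a b)) (add (neg b) (neg a))
        = add (neg b) (add (add (add (neg a) a) (add b (neg b))) (neg a)) := by
          simp only [hassoc]
      _ = add (neg b) (add (add (add b (neg b)) (add (neg a) a)) (neg a)) := by rw [← hc]
      _ = add (neg b) (neg a) := by
          simp only [← hassoc]
          rw [h2 b, m2 add neg hassoc h2 (neg b) a]

end DistribAux

/-- Let `(S,+)` and `(S,·)` be inverse semigroups on the same set. The distributivity
law `x·(y+z) = x·y - x + x·z` holds for all `x, y, z` if and only if each map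
`λ_x : y ↦ -x + x·y` is an endomorphism of `(S,+)` and `λ_{x·y} = λ_x ∘ λ_y` for all
`x, y`. -/
theorem distributivity_iff_lambda_homomorphisms
    {S : Type*} (add mul : S → S → S) (neg inv : S → S)
    (haddassoc : ∀ a b c : S, add (add a b) c = add a (add b c))
    (hmulassoc : ∀ a b c : S, mul (mul a b) c = mul a (mul b c))
    (hneg₁ : ∀ a : S, add (add a (neg a)) a = a)
    (hneg₂ : ∀ a : S, add (add (neg a) a) (neg a) = neg a)
    (hneguniq : ∀ a b : S, add (add a b) a = a → add (add b a) b = b → b = neg a)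
    (hinv₁ : ∀ a : S, mul (mul a (inv a)) a = a)
    (hinv₂ : ∀ a : S, mul (mul (inv a) a) (inv a) = inv a)
    (hinvuniq : ∀ a b : S, mul (mul a b) a = a → mul (mul b a) b = b → b = inv a) :
    (∀ x y z : S, mul x (add y z) = add (add (mul x y) (neg x)) (mul x z)) ↔
      ((∀ x y z : S,
          add (neg x) (mul x (add y z)) =
            add (add (neg x) (mul x y)) (add (neg x) (mul x z))) ∧
        (∀ x y z : S,
          add (neg (mul x y)) (mul (mul x y) z) =
            add (neg x) (mul x (add (neg y) (mul y z))))) := by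
  have hNN : ∀ a : S, neg (neg a) = a :=
    DistribAux.negneg add neg hneg₁ hneg₂ hneguniq
  have hNA : ∀ a b : S, neg (add a b) = add (neg b) (neg a) :=
    DistribAux.neg_add add neg haddassoc hneg₁ hneg₂ hneguniq
  constructor
  · -- forward direction
    intro hd
    have hnegmul : ∀ x y : S,
        neg (mul x y) = add (add (neg x) (mul x (neg y))) (neg x) := by
      intro x y
      symm
      have hB : mul x y = add (add (add (add (mul x y) (neg x)) (mul x (neg y)))
          (neg x)) (mul x y) := by
        have h := hd x (add y (neg y)) y
        rw [hneg₁ y] at h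
        rw [hd x y (neg y)] at h
        exact h
      have hB' : mul x (neg y) = add (add (add (add (mul x (neg y)) (neg x))
          (mul x y)) (neg x)) (mul x (neg y)) := by
        have h := hd x (add (neg y) y) (neg y)
        rw [hneg₂ y] at h
        rw [hd x (neg y) y] at h
        exact h
      apply hneguniq
      · simp only [← haddassoc]
        exact hB.symm
      · have hB'' : ∀ t : S, add (mul x (neg y)) (add (neg x) (add (mul x y)
            (add (neg x) (add (mul x (neg y)) t)))) = add (mul x (neg y)) t := by
          intro t
          calc add (mul x (neg y)) (add (neg x) (add (mul x y)
                (add (neg x) (add (mul x (neg y)) t))))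
              = add (add (add (add (add (mul x (neg y)) (neg x)) (mul x y))
                (neg x)) (mul x (neg y))) t := by simp only [haddassoc]
            _ = add (mul x (neg y)) t := by rw [← hB']
        simp only [haddassoc]
        rw [hB'' (neg x)]
    constructor
    · intro x y z
      rw [hd x y z]
      simp only [haddassoc]
    · intro x y z
      rw [hd x (neg y) (mul y z), hnegmul x y, hmulassoc x y z]
      simp only [haddassoc]
  · -- converse direction
    rintro ⟨hi, hii⟩
    -- λ_x preserves additive inverses
    have hN : ∀ x a : S, add (neg x) (mul x (neg a)) = neg (add (neg x) (mul x a)) := by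
      intro x a
      apply hneguniq
      · rw [← hi x a (neg a), ← hi x (add a (neg a)) a, hneg₁ a]
      · rw [← hi x (neg a) a, ← hi x (add (neg a) a) (neg a), hneg₂ a]
    -- the key identity K
    have hK : ∀ x y z : S, add (neg (mul x y)) (mul (mul x y) z) =
        add (neg (mul x y)) (add x (add (neg x) (mul (mul x y) z))) := by
      intro x y z
      have h := hii x y z
      rw [hi x (neg y) (mul y z)] at h
      rw [hN x y] at h
      rw [hNA (neg x) (mul x y)] at h
      rw [hNN x] at h
      rw [← hmulassoc x y z] at h
      rw [haddassoc (neg (mul x y)) x (add (neg x) (mul (mul x y) z))] at h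
      exact h
    -- the absorption lemma L
    have hL : ∀ x w : S, add (add x (neg x)) (mul x w) = mul x w := by
      intro x w
      have haz : mul (mul x w) (mul (inv (mul x w)) (mul x w)) = mul x w := by
        rw [← hmulassoc]; exact hinv₁ (mul x w)
      have G1 : add (neg (mul x w)) (add x (add (neg x) (mul x w)))
          = add (neg (mul x w)) (mul x w) := by
        have h := hK x w (mul (inv (mul x w)) (mul x w))
        rw [haz] at h
        exact h.symm
      have he : add (add x (neg x)) (add x (neg x)) = add x (neg x) := by
        rw [← haddassoc (add x (neg x)) x (neg x), hneg₁ x]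
      have he3 : add (add (mul x w) (neg (mul x w))) (add (mul x w) (neg (mul x w)))
          = add (mul x w) (neg (mul x w)) := by
        rw [← haddassoc (add (mul x w) (neg (mul x w))) (mul x w) (neg (mul x w)),
          hneg₁ (mul x w)]
      have hc := DistribAux.idem_comm add neg haddassoc hneg₁ hneg₂ hneguniq he3 he
      have hs : add (add x (neg x)) (mul x w) = neg (neg (mul x w)) := by
        apply hneguniq
        · rw [haddassoc x (neg x) (mul x w), G1]
          exact hneg₂ (mul x w)
        · calc add (add (add (add x (neg x)) (mul x w)) (neg (mul x w)))
                (add (add x (neg x)) (mul x w))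
              = add (add (add x (neg x)) (add (add (mul x w) (neg (mul x w)))
                (add x (neg x)))) (mul x w) := by simp only [haddassoc]
            _ = add (add (add x (neg x)) (add (add x (neg x))
                (add (mul x w) (neg (mul x w))))) (mul x w) := by rw [hc]
            _ = add (add x (neg x)) (mul x w) := by
                simp only [← haddassoc]
                rw [hneg₁ x, DistribAux.m1 add neg haddassoc hneg₁
                  (add x (neg x)) (mul x w)]
      exact hs.trans (hNN (mul x w))
    intro x y z
    calc mul x (add y z)
        = add (add x (neg x)) (mul x (add y z)) := (hL x (add y z)).symm
      _ = add x (add (neg x) (mul x (add y z))) := haddassoc _ _ _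
      _ = add x (add (add (neg x) (mul x y)) (add (neg x) (mul x z))) := by
          rw [hi x y z]
      _ = add (add (add x (neg x)) (mul x y)) (add (neg x) (mul x z)) := by
          simp only [haddassoc]
      _ = add (mul x y) (add (neg x) (mul x z)) := by rw [hL x y]
      _ = add (add (mul x y) (neg x)) (mul x z) := (haddassoc _ _ _).symm
end

section
/- In a dual weak left brace (S,+,·), for each a ∈ S the restriction of λ_a (where λ_a(b) = -a + a·b) to the subgroup H_a = { x | x + (-x) = a + (-a) } is a bijective endomorphism of (H_a, +), with inverse given by the restriction of λ_{a⁻¹}. -/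
theorem wlb_inv_inv {S : Type*} {op : S → S → S} {i : S → S}
    (h1 : ∀ a : S, op (op a (i a)) a = a)
    (h2 : ∀ a : S, op (op (i a) a) (i a) = i a)
    (hu : ∀ a b : S, op (op a b) a = a → op (op b a) b = b → b = i a) :
    ∀ a : S, i (i a) = a :=
  fun a => (hu (i a) a (h2 a) (h1 a)).symm

theorem wlb_idem_inv {S : Type*} {op : S → S → S} {i : S → S}
    (hu : ∀ a b : S, op (op a b) a = a → op (op b a) b = b → b = i a) :
    ∀ u : S, op u u = u → i u = u := by
  intro u h
  have h' : op (op u u) u = u := by rw [h, h]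
  exact (hu u u h' h').symm

theorem wlb_idem_op {S : Type*} {op : S → S → S} {i : S → S}
    (hassoc : ∀ a b c : S, op (op a b) c = op a (op b c))
    (h1 : ∀ a : S, op (op a (i a)) a = a)
    (h2 : ∀ a : S, op (op (i a) a) (i a) = i a)
    (hu : ∀ a b : S, op (op a b) a = a → op (op b a) b = b → b = i a)
    (e f : S) (he : op e e = e) (hf : op f f = f) :
    op (op e f) (op e f) = op e f := by
  have hec : ∀ t, op e (op e t) = op e t := fun t => by rw [← hassoc, he]
  have hfc : ∀ t, op f (op f t) = op f t := fun t => by rw [← hassoc, hf]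
  have h1ef : op (op e f) (op (i (op e f)) (op e f)) = op e f := by
    have h := h1 (op e f); rw [hassoc] at h; exact h
  have h2ef : op (op (i (op e f)) (op e f)) (i (op e f)) = i (op e f) := h2 (op e f)
  have key : op f (op (i (op e f)) (op e (op f (op (i (op e f)) e)))) =
      op f (op (i (op e f)) e) := by
    rw [← hassoc e f (op (i (op e f)) e),
        ← hassoc (i (op e f)) (op e f) (op (i (op e f)) e),
        ← hassoc (op (i (op e f)) (op e f)) (i (op e f)) e, h2ef]
  have cond1 : op (op (op e f) (op (op f (i (op e f))) e)) (op e f) = op e f := by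
    simp only [hassoc]
    rw [hfc, hec]
    rw [← hassoc e f (op (i (op e f)) (op e f))]
    exact h1ef
  have cond2 : op (op (op (op f (i (op e f))) e) (op e f)) (op (op f (i (op e f))) e) =
      op (op f (i (op e f))) e := by
    simp only [hassoc]
    rw [hec, hfc]
    exact key
  have hyx := hu (op e f) (op (op f (i (op e f))) e) cond1 cond2
  have hxx : op (i (op e f)) (i (op e f)) = i (op e f) := by
    rw [← hyx]
    simp only [hassoc]
    exact key
  have hinvx : i (i (op e f)) = op e f := wlb_inv_inv h1 h2 hu (op e f)
  have hix : i (i (op e f)) = i (op e f) := wlb_idem_inv hu _ hxx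
  have hef : op e f = i (op e f) := hinvx.symm.trans hix
  rw [hef]
  exact hxx

theorem wlb_idem_comm {S : Type*} {op : S → S → S} {i : S → S}
    (hassoc : ∀ a b c : S, op (op a b) c = op a (op b c))
    (h1 : ∀ a : S, op (op a (i a)) a = a)
    (h2 : ∀ a : S, op (op (i a) a) (i a) = i a)
    (hu : ∀ a b : S, op (op a b) a = a → op (op b a) b = b → b = i a)
    (e f : S) (he : op e e = e) (hf : op f f = f) :
    op e f = op f e := by
  have hec : ∀ t, op e (op e t) = op e t := fun t => by rw [← hassoc, he]
  have hfc : ∀ t, op f (op f t) = op f t := fun t => by rw [← hassoc, hf]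
  have hef := wlb_idem_op hassoc h1 h2 hu e f he hf
  have hfe := wlb_idem_op hassoc h1 h2 hu f e hf he
  have hief : i (op e f) = op e f := wlb_idem_inv hu _ hef
  have c1 : op (op (op e f) (op f e)) (op e f) = op e f := by
    simp only [hassoc]
    rw [hfc, hec]
    have h := hef; simp only [hassoc] at h; exact h
  have c2 : op (op (op f e) (op e f)) (op f e) = op f e := by
    simp only [hassoc]
    rw [hec, hfc]
    have h := hfe; simp only [hassoc] at h; exact h
  have h := hu (op e f) (op f e) c1 c2
  rw [hief] at h
  exact h.symm

theorem wlb_inv_op {S : Type*} {op : S → S → S} {i : S → S}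
    (hassoc : ∀ a b c : S, op (op a b) c = op a (op b c))
    (h1 : ∀ a : S, op (op a (i a)) a = a)
    (h2 : ∀ a : S, op (op (i a) a) (i a) = i a)
    (hu : ∀ a b : S, op (op a b) a = a → op (op b a) b = b → b = i a) :
    ∀ a b : S, i (op a b) = op (i b) (i a) := by
  intro a b
  have hbu : op (op b (i b)) (op b (i b)) = op b (i b) := by
    rw [← hassoc (op b (i b)) b (i b), h1]
  have hv : op (op (i a) a) (op (i a) a) = op (i a) a := by
    rw [← hassoc (op (i a) a) (i a) a, h2]
  have hcomm := wlb_idem_comm hassoc h1 h2 hu (op b (i b)) (op (i a) a) hbu hv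
  have cond1 : op (op (op a b) (op (i b) (i a))) (op a b) = op a b := by
    simp only [hassoc]
    rw [← hassoc b (i b) (op (i a) (op a b)), ← hassoc (i a) a b,
        ← hassoc (op b (i b)) (op (i a) a) b, hcomm,
        hassoc (op (i a) a) (op b (i b)) b, h1 b,
        ← hassoc a (op (i a) a) b, ← hassoc a (i a) a, h1 a]
  have cond2 : op (op (op (i b) (i a)) (op a b)) (op (i b) (i a)) = op (i b) (i a) := by
    simp only [hassoc]
    rw [← hassoc (i a) a (op b (op (i b) (i a))), ← hassoc b (i b) (i a),
        ← hassoc (op (i a) a) (op b (i b)) (i a), ← hcomm,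
        hassoc (op b (i b)) (op (i a) a) (i a), h2 a,
        ← hassoc (i b) (op b (i b)) (i a), ← hassoc (i b) b (i b), h2 b]
  exact (hu (op a b) (op (i b) (i a)) cond1 cond2).symm

/-- In a dual weak left brace `(S,+,·)`, for every `a` the map `λ_a : b ↦ -a + a·b`
restricts to a bijective endomorphism of the subgroup
`H_a = { x | x + (-x) = a + (-a) }`, whose inverse is the restriction of `λ_{a⁻¹}`. -/
theorem dual_weak_left_brace_lambda_restricts_to_automorphism
    {S : Type*} (add mul : S → S → S) (neg inv : S → S)
    (haddassoc : ∀ a b c : S, add (add a b) c = add a (add b c))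
    (hmulassoc : ∀ a b c : S, mul (mul a b) c = mul a (mul b c))
    (hneg₁ : ∀ a : S, add (add a (neg a)) a = a)
    (hneg₂ : ∀ a : S, add (add (neg a) a) (neg a) = neg a)
    (hneguniq : ∀ a b : S, add (add a b) a = a → add (add b a) b = b → b = neg a)
    (hinv₁ : ∀ a : S, mul (mul a (inv a)) a = a)
    (hinv₂ : ∀ a : S, mul (mul (inv a) a) (inv a) = inv a)
    (hinvuniq : ∀ a b : S, mul (mul a b) a = a → mul (mul b a) b = b → b = inv a)
    (hdist : ∀ x y z : S, mul x (add y z) = add (add (mul x y) (neg x)) (mul x z))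
    (hbrace : ∀ x : S, mul x (inv x) = add (neg x) x)
    (hdual : ∀ x : S, mul x (inv x) = mul (inv x) x) :
    ∀ a : S,
      (∀ x : S, add x (neg x) = add a (neg a) →
        add (add (neg a) (mul a x)) (neg (add (neg a) (mul a x))) = add a (neg a)) ∧
      (∀ x : S, add x (neg x) = add a (neg a) →
        add (add (neg (inv a)) (mul (inv a) x))
            (neg (add (neg (inv a)) (mul (inv a) x))) = add a (neg a)) ∧
      (∀ x y : S, add x (neg x) = add a (neg a) → add y (neg y) = add a (neg a) →
        add (neg a) (mul a (add x y)) =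
          add (add (neg a) (mul a x)) (add (neg a) (mul a y))) ∧
      (∀ x : S, add x (neg x) = add a (neg a) →
        add (neg (inv a)) (mul (inv a) (add (neg a) (mul a x))) = x ∧
        add (neg a) (mul a (add (neg (inv a)) (mul (inv a) x))) = x) := by
  -- basic inverse-semigroup facts
  have negneg : ∀ b : S, neg (neg b) = b := wlb_inv_inv hneg₁ hneg₂ hneguniq
  have invinv : ∀ b : S, inv (inv b) = b := wlb_inv_inv hinv₁ hinv₂ hinvuniq
  have negadd : ∀ x y : S, neg (add x y) = add (neg y) (neg x) :=
    wlb_inv_op haddassoc hneg₁ hneg₂ hneguniq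
  have mulinvrev : ∀ x y : S, inv (mul x y) = mul (inv y) (inv x) :=
    wlb_inv_op hmulassoc hinv₁ hinv₂ hinvuniq
  have addidemcomm := wlb_idem_comm haddassoc hneg₁ hneg₂ hneguniq
  -- idempotents
  have eidem : ∀ b : S, add (mul b (inv b)) (mul b (inv b)) = mul b (inv b) := by
    intro b
    rw [hbrace b, ← haddassoc, hneg₂]
  have fidem : ∀ b : S, add (add b (neg b)) (add b (neg b)) = add b (neg b) := by
    intro b
    rw [← haddassoc, hneg₁]
  have eneg : ∀ b : S, neg (mul b (inv b)) = mul b (inv b) :=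
    fun b => wlb_idem_inv hneguniq _ (eidem b)
  -- easy multiplicative identities
  have ae : ∀ b : S, mul b (mul b (inv b)) = b := by
    intro b
    rw [hdual b, ← hmulassoc]
    exact hinv₁ b
  have a'e : ∀ b : S, mul (inv b) (mul b (inv b)) = inv b := by
    intro b
    rw [← hmulassoc]
    exact hinv₂ b
  have ea' : ∀ b : S, mul (mul b (inv b)) (inv b) = inv b := by
    intro b
    rw [hdual b]
    exact hinv₂ b
  -- λ lemmas
  have lamadd : ∀ b x y : S, add (neg b) (mul b (add x y)) =
      add (add (neg b) (mul b x)) (add (neg b) (mul b y)) := by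
    intro b x y
    rw [hdist b x y]
    simp only [haddassoc]
  have lamneg : ∀ b x : S, add (neg b) (mul b (neg x)) = neg (add (neg b) (mul b x)) := by
    intro b x
    have c1 : add (add (add (neg b) (mul b x)) (add (neg b) (mul b (neg x))))
        (add (neg b) (mul b x)) = add (neg b) (mul b x) := by
      rw [← lamadd b x (neg x), ← lamadd b (add x (neg x)) x, hneg₁ x]
    have c2 : add (add (add (neg b) (mul b (neg x))) (add (neg b) (mul b x)))
        (add (neg b) (mul b (neg x))) = add (neg b) (mul b (neg x)) := by
      rw [← lamadd b (neg x) x, ← lamadd b (add (neg x) x) (neg x), hneg₂ x]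
    exact hneguniq (add (neg b) (mul b x)) (add (neg b) (mul b (neg x))) c1 c2
  -- second expression for b·b⁻¹
  have eE' : ∀ b : S, mul b (inv b) = add (neg (inv b)) (inv b) := by
    intro b
    have h := hbrace (inv b)
    rw [invinv b] at h
    exact (hdual b).trans h
  -- key: e_b + f_b = e_b
  have key : ∀ b : S, add (mul b (inv b)) (add b (neg b)) = mul b (inv b) := by
    intro b
    have lam'e : add (neg (inv b)) (mul (inv b) (mul b (inv b))) = mul b (inv b) := by
      rw [a'e b]
      exact (eE' b).symm
    have lame : add (neg b) (mul b (mul b (inv b))) = mul b (inv b) := by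
      rw [ae b]
      exact (hbrace b).symm
    have h : add (neg b) (mul b (add (neg (inv b)) (mul (inv b) (mul b (inv b))))) =
        add (neg b) (mul b (mul b (inv b))) := by rw [lam'e]
    rw [lame] at h
    rw [lamadd b (neg (inv b)) (mul (inv b) (mul b (inv b)))] at h
    rw [lamneg b (inv b)] at h
    rw [a'e b] at h
    rw [negadd (neg b) (mul b (inv b))] at h
    rw [eneg b, negneg b] at h
    simp only [haddassoc] at h
    rw [← haddassoc b (neg b) (mul b (inv b))] at h
    rw [addidemcomm (add b (neg b)) (mul b (inv b)) (fidem b) (eidem b)] at h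
    rw [← haddassoc] at h
    rw [eidem b] at h
    exact h
  -- Fact A : (S,+) is Clifford
  have facta : ∀ b : S, add b (neg b) = add (neg b) b := by
    intro b
    have h1b := key b
    have h2b := key (neg b)
    rw [hbrace (neg b), negneg b] at h2b
    rw [hbrace b] at h1b
    have eidem' : add (add (neg b) b) (add (neg b) b) = add (neg b) b := by
      have h := eidem b; rw [hbrace b] at h; exact h
    have hcomm := addidemcomm (add (neg b) b) (add b (neg b)) eidem' (fidem b)
    exact h2b.symm.trans (hcomm.symm.trans h1b)
  have xx' : ∀ b : S, mul b (inv b) = add b (neg b) :=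
    fun b => (hbrace b).trans (facta b).symm
  intro a
  have eInv : mul a (inv a) = add (inv a) (neg (inv a)) := by
    have h := xx' (inv a)
    rw [invinv a] at h
    exact (hdual a).trans h
  refine ⟨?_, ?_, ?_, ?_⟩
  · -- Goal 1
    intro x hx
    have t1 : mul x (inv x) = mul a (inv a) := (xx' x).trans (hx.trans (xx' a).symm)
    have g : add (mul a x) (neg (mul a x)) = mul a (inv a) := by
      rw [← xx' (mul a x), mulinvrev a x, hmulassoc, ← hmulassoc x (inv x) (inv a),
        t1, ea' a]
    rw [negadd (neg a) (mul a x), negneg a, haddassoc,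
      ← haddassoc (mul a x) (neg (mul a x)) a, g, xx' a, hneg₁ a]
    exact (facta a).symm
  · -- Goal 2
    intro x hx
    have t1 : mul x (inv x) = mul a (inv a) := (xx' x).trans (hx.trans (xx' a).symm)
    have g2 : add (mul (inv a) x) (neg (mul (inv a) x)) = mul a (inv a) := by
      rw [← xx' (mul (inv a) x), mulinvrev (inv a) x, invinv a, hmulassoc,
        ← hmulassoc x (inv x) a, t1, hinv₁ a]
      exact (hdual a).symm
    rw [negadd (neg (inv a)) (mul (inv a) x), negneg (inv a), haddassoc,
      ← haddassoc (mul (inv a) x) (neg (mul (inv a) x)) (inv a), g2, eInv,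
      hneg₁ (inv a)]
    have h5 := hbrace (inv a)
    rw [invinv a] at h5
    rw [← h5, ← hdual a]
    exact xx' a
  · -- Goal 3
    intro x y _ _
    exact lamadd a x y
  · -- Goal 4
    intro x hx
    have t1 : mul x (inv x) = mul a (inv a) := (xx' x).trans (hx.trans (xx' a).symm)
    constructor
    · rw [lamadd (inv a) (neg a) (mul a x), lamneg (inv a) a]
      have exx : mul (inv a) (mul a x) = x := by
        rw [← hmulassoc, ← hdual a, ← t1]
        exact hinv₁ x
      rw [exx, ← hdual a]
      rw [negadd (neg (inv a)) (mul a (inv a)), eneg a, negneg (inv a)]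
      rw [haddassoc, ← haddassoc (inv a) (neg (inv a)) x, ← eInv]
      rw [← haddassoc, eidem a]
      rw [xx' a, ← hx]
      exact hneg₁ x
    · rw [lamadd a (neg (inv a)) (mul (inv a) x), lamneg a (inv a)]
      have exx2 : mul a (mul (inv a) x) = x := by
        rw [← hmulassoc, ← t1]
        exact hinv₁ x
      rw [exx2]
      rw [negadd (neg a) (mul a (inv a)), eneg a, negneg a]
      rw [haddassoc, ← haddassoc a (neg a) x, ← xx' a]
      rw [← haddassoc, eidem a]
      rw [xx' a, ← hx]
      exact hneg₁ x
end

section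
/- Let (S,+) be a Clifford semigroup and let γ : S → End(S,+), x ↦ γ_x, be a Gamma function on (S,+). Define x ∘ y = x + γ_x(y). Then (S,+,∘) is a weak left brace, and for each x the element x⁻¹ occurring in axiom (F3) is the inverse of x in (S,∘). -/
/-- Let `(S,+)` be a Clifford semigroup and `γ` a Gamma function on it. Defining
`x ∘ y = x + γ_x(y)`, the triple `(S,+,∘)` is a weak left brace, and the element
`x⁻¹` from axiom (F3) is the inverse of `x` in `(S,∘)`. -/
theorem gamma_function_gives_weak_left_brace
    {S : Type*} (add : S → S → S) (neg : S → S) (gam : S → S → S) (inv : S → S)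
    (haddassoc : ∀ a b c : S, add (add a b) c = add a (add b c))
    (hneg₁ : ∀ a : S, add (add a (neg a)) a = a)
    (hneg₂ : ∀ a : S, add (add (neg a) a) (neg a) = neg a)
    (hneguniq : ∀ a b : S, add (add a b) a = a → add (add b a) b = b → b = neg a)
    (hcliff : ∀ a : S, add (neg a) a = add a (neg a))
    (hend : ∀ x a b : S, gam x (add a b) = add (gam x a) (gam x b))
    (hF1a : ∀ x y z : S, gam x (gam y z) = gam (add x (gam x y)) z)
    (hF1b : ∀ x : S, gam (add x (neg x)) x = x)
    (hF1c : ∀ x y : S, add (add x (neg x)) (gam x y) = gam x y)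
    (hF2 : ∀ x : S, gam x x = add x (neg x) → x = add x (neg x))
    (hF3a : ∀ x : S, gam x (inv x) = neg x)
    (hF3b : ∀ x : S, gam (inv x) x = neg (inv x))
    (hF4 : ∀ e f : S, add e e = e → add f f = f → gam e f = add e f) :
    let comp : S → S → S := fun x y => add x (gam x y)
    (∀ a b c : S, comp (comp a b) c = comp a (comp b c)) ∧
    (∀ x : S, comp (comp x (inv x)) x = x) ∧
    (∀ x : S, comp (comp (inv x) x) (inv x) = inv x) ∧
    (∀ x b : S, comp (comp x b) x = x → comp (comp b x) b = b → b = inv x) ∧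
    (∀ x y z : S, comp x (add y z) = add (add (comp x y) (neg x)) (comp x z)) ∧
    (∀ x : S, comp x (inv x) = add (neg x) x) := by
  intro comp
  have hcdef : ∀ x y : S, comp x y = add x (gam x y) := fun _ _ => rfl
  -- additive facts
  have negneg : ∀ a : S, neg (neg a) = a := fun a =>
    (hneguniq (neg a) a (hneg₂ a) (hneg₁ a)).symm
  have idem0 : ∀ a : S, add (add a (neg a)) (add a (neg a)) = add a (neg a) := by
    intro a; rw [← haddassoc, hneg₁]
  have negidem : ∀ e : S, add e e = e → neg e = e := by
    intro e he
    exact (hneguniq e e (by rw [he, he]) (by rw [he, he])).symm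
  have habs : ∀ e x : S, add e e = e → add e (add e x) = add e x := by
    intro e x he; rw [← haddassoc, he]
  -- products of idempotents are idempotent
  have idemadd : ∀ e f : S, add e e = e → add f f = f →
      add (add e f) (add e f) = add e f := by
    intro e f he hf
    have k := hneg₂ (add e f)
    have key2 : add (neg (add e f)) (add e (add f (add (neg (add e f)) e)))
        = add (neg (add e f)) e := by
      calc add (neg (add e f)) (add e (add f (add (neg (add e f)) e)))
          = add (add (add (neg (add e f)) (add e f)) (neg (add e f))) e := by
            simp only [haddassoc]
        _ = add (neg (add e f)) e := by rw [k]
    have h1 : add (add (add e f) (add (add f (neg (add e f))) e)) (add e f)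
        = add e f := by
      simp only [haddassoc]
      rw [habs f _ hf, habs e f he]
      simpa only [haddassoc] using hneg₁ (add e f)
    have h2 : add (add (add (add f (neg (add e f))) e) (add e f))
        (add (add f (neg (add e f))) e) = add (add f (neg (add e f))) e := by
      simp only [haddassoc]
      rw [habs e _ he, habs f _ hf, key2]
    have hg : add (add f (neg (add e f))) e = neg (add e f) :=
      hneguniq (add e f) (add (add f (neg (add e f))) e) h1 h2
    have hgidem : add (add (add f (neg (add e f))) e)
        (add (add f (neg (add e f))) e) = add (add f (neg (add e f))) e := by
      simp only [haddassoc]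
      rw [key2]
    have hni : add (neg (add e f)) (neg (add e f)) = neg (add e f) := by
      rw [← hg]; exact hgidem
    have hef2 : add e f = add (add f (neg (add e f))) e := by
      calc add e f = neg (neg (add e f)) := (negneg _).symm
        _ = neg (add e f) := by rw [negidem _ hni]
        _ = add (add f (neg (add e f))) e := hg.symm
    rw [hef2]
    exact hgidem
  -- idempotents commute
  have idemcomm : ∀ e f : S, add e e = e → add f f = f → add e f = add f e := by
    intro e f he hf
    have hef := idemadd e f he hf
    have hfe := idemadd f e hf he
    have h1 : add (add (add e f) (add f e)) (add e f) = add e f := by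
      calc add (add (add e f) (add f e)) (add e f)
          = add (add e f) (add e f) := by
            simp only [haddassoc]
            rw [habs f _ hf, habs e f he]
        _ = add e f := hef
    have h2 : add (add (add f e) (add e f)) (add f e) = add f e := by
      calc add (add (add f e) (add e f)) (add f e)
          = add (add f e) (add f e) := by
            simp only [haddassoc]
            rw [habs e _ he, habs f e hf]
        _ = add f e := hfe
    have := hneguniq (add e f) (add f e) h1 h2
    rw [this, negidem _ hef]
  -- composition facts
  have compassoc : ∀ a b c : S, comp (comp a b) c = comp a (comp b c) := by
    intro a b c
    rw [hcdef, hcdef, hcdef, hcdef, ← hF1a, haddassoc, ← hend]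
  have item2 : ∀ x : S, comp (comp x (inv x)) x = x := by
    intro x
    have h : comp x (inv x) = add x (neg x) := by rw [hcdef, hF3a]
    rw [h, hcdef, hF1b, hneg₁]
  have item3 : ∀ x : S, comp (comp (inv x) x) (inv x) = inv x := by
    intro x
    have h : comp (inv x) x = add (inv x) (neg (inv x)) := by rw [hcdef, hF3b]
    rw [h, hcdef, hF1b, hneg₁]
  have item5 : ∀ x y z : S,
      comp x (add y z) = add (add (comp x y) (neg x)) (comp x z) := by
    intro x y z
    have h : add (neg x) (add x (gam x z)) = gam x z := by
      rw [← haddassoc, hcliff]; exact hF1c x z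
    rw [hcdef, hcdef, hcdef, hend]
    simp only [haddassoc]
    rw [h]
  have item6 : ∀ x : S, comp x (inv x) = add (neg x) x := by
    intro x
    rw [hcdef, hF3a, ← hcliff]
  -- ∘-idempotents
  have compidem : ∀ u v : S, comp (comp u v) u = u →
      comp (comp u v) (comp u v) = comp u v := by
    intro u v h
    calc comp (comp u v) (comp u v) = comp (comp (comp u v) u) v :=
          (compassoc _ _ _).symm
      _ = comp u v := by rw [h]
  have addidem_of_compidem : ∀ e : S, comp e e = e → add e e = e := by
    intro e he
    rw [hcdef] at he
    have h1 : gam e e = add e (neg e) := by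
      calc gam e e = add (add e (neg e)) (gam e e) := (hF1c e e).symm
        _ = add (add (neg e) e) (gam e e) := by rw [hcliff]
        _ = add (neg e) (add e (gam e e)) := haddassoc _ _ _
        _ = add (neg e) e := by rw [he]
        _ = add e (neg e) := hcliff e
    have heq := hF2 e h1
    have h2 := idem0 e
    rw [← heq] at h2
    exact h2
  have compcomm : ∀ e f : S, comp e e = e → comp f f = f →
      comp e f = comp f e := by
    intro e f he hf
    have he' := addidem_of_compidem e he
    have hf' := addidem_of_compidem f hf
    rw [hcdef, hcdef, hF4 e f he' hf', hF4 f e hf' he', habs e f he', habs f e hf']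
    exact idemcomm e f he' hf'
  -- uniqueness of ∘-inverses
  have item4 : ∀ x b : S, comp (comp x b) x = x → comp (comp b x) b = b →
      b = inv x := by
    intro x b hb1 hb2
    have hc1 := item2 x
    have hc2 := item3 x
    have hbx_id := compidem b x hb2
    have hcx_id := compidem (inv x) x hc2
    have hxb_id := compidem x b hb1
    have hxc_id := compidem x (inv x) hc1
    have hb1' : comp x (comp b x) = x := by rw [← compassoc]; exact hb1
    have hc1' : comp x (comp (inv x) x) = x := by rw [← compassoc]; exact hc1
    have hcc : comp (inv x) (comp x (inv x)) = inv x := by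
      rw [← compassoc]; exact hc2
    have hEq : comp b x = comp (inv x) x := by
      calc comp b x = comp b (comp x (comp (inv x) x)) := by rw [hc1']
        _ = comp (comp b x) (comp (inv x) x) := by rw [← compassoc]
        _ = comp (comp (inv x) x) (comp b x) := compcomm _ _ hbx_id hcx_id
        _ = comp (inv x) (comp x (comp b x)) := compassoc _ _ _
        _ = comp (inv x) x := by rw [hb1']
    have hb3 : b = comp (inv x) (comp x b) := by
      calc b = comp (comp b x) b := hb2.symm
        _ = comp (comp (inv x) x) b := by rw [hEq]
        _ = comp (inv x) (comp x b) := compassoc _ _ _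
    have hxc : comp x (inv x) = comp (comp x (inv x)) (comp x b) := by
      calc comp x (inv x) = comp (comp (comp x b) x) (inv x) := by rw [hb1]
        _ = comp (comp x b) (comp x (inv x)) := compassoc _ _ _
        _ = comp (comp x (inv x)) (comp x b) := compcomm _ _ hxb_id hxc_id
    have hc3 : inv x = comp (inv x) (comp x b) := by
      calc inv x = comp (inv x) (comp x (inv x)) := hcc.symm
        _ = comp (inv x) (comp (comp x (inv x)) (comp x b)) := by rw [← hxc]
        _ = comp (comp (inv x) (comp x (inv x))) (comp x b) :=
            (compassoc _ _ _).symm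
        _ = comp (inv x) (comp x b) := by rw [hcc]
    rw [hb3, ← hc3]
  exact ⟨compassoc, item2, item3, item4, item5, item6⟩
end

section
/- Let (S,+,·) be a weak left brace and define γ : S → End(S,+) by γ_x(y) = -x + x·y. Then γ is a Gamma function on the Clifford semigroup (S,+): it satisfies (F1) γ_x γ_y = γ_{x+γ_x(y)}, γ_{x^0}(x) = x, x^0 + γ_x(y) = γ_x(y); (F2) γ_x(x) = x^0 implies x = x^0; (F3) γ_x(x⁻¹) = -x and γ_{x⁻¹}(x) = -x⁻¹; (F4) γ_e(f) = e + f for idempotents e, f. -/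
set_option linter.unusedSectionVars false
set_option maxHeartbeats 1000000

section InvSg
variable {S : Type*} (m : S → S → S) (i : S → S)
  (hassoc : ∀ a b c : S, m (m a b) c = m a (m b c))
  (h1 : ∀ a : S, m (m a (i a)) a = a)
  (h2 : ∀ a : S, m (m (i a) a) (i a) = i a)
  (huniq : ∀ a b : S, m (m a b) a = a → m (m b a) b = b → b = i a)

include hassoc h1 h2 huniq

theorem wlb_inv_invol (a : S) : i (i a) = a := (huniq (i a) a (h2 a) (h1 a)).symm

theorem wlb_idem_inv_s16 (e : S) (he : m e e = e) : i e = e :=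
  (huniq e e (by rw [he, he]) (by rw [he, he])).symm

theorem wlb_idem_mul_idem (e f : S) (he : m e e = e) (hf : m f f = f) :
    m (m e f) (m e f) = m e f := by
  have he' : ∀ z, m e (m e z) = m e z := fun z => by rw [← hassoc, he]
  have hf' : ∀ z, m f (m f z) = m f z := fun z => by rw [← hassoc, hf]
  obtain ⟨x, hx⟩ : ∃ x, x = i (m e f) := ⟨_, rfl⟩
  have hx1 : m (m (m e f) x) (m e f) = m e f := by rw [hx]; exact h1 _
  have hx2 : m (m x (m e f)) x = x := by rw [hx]; exact h2 _
  have hx2' : ∀ z, m x (m e (m f (m x z))) = m x z := fun z => by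
    rw [← hassoc e f, ← hassoc x, ← hassoc, hx2]
  have s1 : m (m f x) e = x := by
    refine (huniq (m e f) (m (m f x) e) ?_ ?_).trans hx.symm
    · calc m (m (m e f) (m (m f x) e)) (m e f)
          = m e (m f (m f (m x (m e (m e f))))) := by simp only [hassoc]
        _ = m e (m f (m x (m e f))) := by rw [hf', he']
        _ = m (m (m e f) x) (m e f) := by simp only [hassoc]
        _ = m e f := hx1
    · calc m (m (m (m f x) e) (m e f)) (m (m f x) e)
          = m f (m x (m e (m e (m f (m f (m x e)))))) := by simp only [hassoc]
        _ = m f (m x (m e (m f (m x e)))) := by rw [he', hf']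
        _ = m f (m x e) := by rw [hx2']
        _ = m (m f x) e := by simp only [hassoc]
  have s2 : m x x = x := by
    conv_lhs => rw [← s1]
    calc m (m (m f x) e) (m (m f x) e)
        = m f (m x (m e (m f (m x e)))) := by simp only [hassoc]
      _ = m f (m x e) := by rw [hx2']
      _ = m (m f x) e := by simp only [hassoc]
      _ = x := s1
  have s3 : m e f = x := by
    have h := huniq x (m e f) hx2 hx1
    rw [h, wlb_idem_inv_s16 m i hassoc h1 h2 huniq x s2]
  rw [s3, s2]

theorem wlb_idem_comm_s16 (e f : S) (he : m e e = e) (hf : m f f = f) :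
    m e f = m f e := by
  have he' : ∀ z, m e (m e z) = m e z := fun z => by rw [← hassoc, he]
  have hf' : ∀ z, m f (m f z) = m f z := fun z => by rw [← hassoc, hf]
  have hef := wlb_idem_mul_idem m i hassoc h1 h2 huniq e f he hf
  have hfe := wlb_idem_mul_idem m i hassoc h1 h2 huniq f e hf he
  have key : m f e = i (m e f) := by
    refine huniq (m e f) (m f e) ?_ ?_
    · calc m (m (m e f) (m f e)) (m e f)
          = m e (m f (m f (m e (m e f)))) := by simp only [hassoc]
        _ = m e (m f (m e f)) := by rw [hf', he']
        _ = m (m e f) (m e f) := by simp only [hassoc]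
        _ = m e f := hef
    · calc m (m (m f e) (m e f)) (m f e)
          = m f (m e (m e (m f (m f e)))) := by simp only [hassoc]
        _ = m f (m e (m f e)) := by rw [he', hf']
        _ = m (m f e) (m f e) := by simp only [hassoc]
        _ = m f e := hfe
  rw [key, wlb_idem_inv_s16 m i hassoc h1 h2 huniq _ hef]

theorem wlb_inv_mul (a b : S) : i (m a b) = m (i b) (i a) := by
  have hba : m (m b (i b)) (m (i a) a) = m (m (i a) a) (m b (i b)) := by
    refine wlb_idem_comm_s16 m i hassoc h1 h2 huniq _ _ ?_ ?_
    · calc m (m b (i b)) (m b (i b)) = m (m (m b (i b)) b) (i b) := by simp only [hassoc]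
        _ = m b (i b) := by rw [h1]
    · calc m (m (i a) a) (m (i a) a) = m (m (m (i a) a) (i a)) a := by simp only [hassoc]
        _ = m (i a) a := by rw [h2]
  refine (huniq (m a b) (m (i b) (i a)) ?_ ?_).symm
  · calc m (m (m a b) (m (i b) (i a))) (m a b)
        = m a (m (m (m b (i b)) (m (i a) a)) b) := by simp only [hassoc]
      _ = m a (m (m (m (i a) a) (m b (i b))) b) := by rw [hba]
      _ = m (m (m a (i a)) a) (m (m b (i b)) b) := by simp only [hassoc]
      _ = m a b := by rw [h1, h1]
  · calc m (m (m (i b) (i a)) (m a b)) (m (i b) (i a))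
        = m (i b) (m (m (m (i a) a) (m b (i b))) (i a)) := by simp only [hassoc]
      _ = m (i b) (m (m (m b (i b)) (m (i a) a)) (i a)) := by rw [← hba]
      _ = m (m (m (i b) b) (i b)) (m (m (i a) a) (i a)) := by simp only [hassoc]
      _ = m (i b) (i a) := by rw [h2, h2]

end InvSg

/-- In a weak left brace `(S,+,·)`, the map `γ : x ↦ (y ↦ -x + x·y)` is a Gamma
function on the Clifford semigroup `(S,+)`, i.e. it satisfies axioms (F1)–(F4). -/
theorem weak_left_brace_lambda_is_gamma_function
    {S : Type*} (add mul : S → S → S) (neg inv : S → S)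
    (haddassoc : ∀ a b c : S, add (add a b) c = add a (add b c))
    (hmulassoc : ∀ a b c : S, mul (mul a b) c = mul a (mul b c))
    (hneg₁ : ∀ a : S, add (add a (neg a)) a = a)
    (hneg₂ : ∀ a : S, add (add (neg a) a) (neg a) = neg a)
    (hneguniq : ∀ a b : S, add (add a b) a = a → add (add b a) b = b → b = neg a)
    (hinv₁ : ∀ a : S, mul (mul a (inv a)) a = a)
    (hinv₂ : ∀ a : S, mul (mul (inv a) a) (inv a) = inv a)
    (hinvuniq : ∀ a b : S, mul (mul a b) a = a → mul (mul b a) b = b → b = inv a)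
    (hdist : ∀ x y z : S, mul x (add y z) = add (add (mul x y) (neg x)) (mul x z))
    (hbrace : ∀ x : S, mul x (inv x) = add (neg x) x) :
    let gam : S → S → S := fun x y => add (neg x) (mul x y)
    (∀ x a b : S, gam x (add a b) = add (gam x a) (gam x b)) ∧
    (∀ x y z : S, gam x (gam y z) = gam (add x (gam x y)) z) ∧
    (∀ x : S, gam (add x (neg x)) x = x) ∧
    (∀ x y : S, add (add x (neg x)) (gam x y) = gam x y) ∧
    (∀ x : S, gam x x = add x (neg x) → x = add x (neg x)) ∧
    (∀ x : S, gam x (inv x) = neg x ∧ gam (inv x) x = neg (inv x)) ∧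
    (∀ e f : S, add e e = e → add f f = f → gam e f = add e f) := by
  intro gam
  -- instances of generic inverse-semigroup lemmas
  have NN : ∀ a : S, neg (neg a) = a :=
    wlb_inv_invol add neg haddassoc hneg₁ hneg₂ hneguniq
  have II : ∀ a : S, inv (inv a) = a :=
    wlb_inv_invol mul inv hmulassoc hinv₁ hinv₂ hinvuniq
  have NI : ∀ e : S, add e e = e → neg e = e :=
    wlb_idem_inv_s16 add neg haddassoc hneg₁ hneg₂ hneguniq
  have MI : ∀ e : S, mul e e = e → inv e = e :=
    wlb_idem_inv_s16 mul inv hmulassoc hinv₁ hinv₂ hinvuniq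
  have NA : ∀ a b : S, neg (add a b) = add (neg b) (neg a) :=
    wlb_inv_mul add neg haddassoc hneg₁ hneg₂ hneguniq
  have ACOMM : ∀ e f : S, add e e = e → add f f = f → add e f = add f e :=
    wlb_idem_comm_s16 add neg haddassoc hneg₁ hneg₂ hneguniq
  have MCOMM : ∀ e f : S, mul e e = e → mul f f = f → mul e f = mul f e :=
    wlb_idem_comm_s16 mul inv hmulassoc hinv₁ hinv₂ hinvuniq
  have MIDEM : ∀ e f : S, mul e e = e → mul f f = f →
      mul (mul e f) (mul e f) = mul e f :=
    wlb_idem_mul_idem mul inv hmulassoc hinv₁ hinv₂ hinvuniq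
  -- basic additive idempotents
  have EI : ∀ x : S, add (add (neg x) x) (add (neg x) x) = add (neg x) x :=
    fun x => by rw [haddassoc, ← haddassoc x, hneg₁]
  have FI : ∀ x : S, add (add x (neg x)) (add x (neg x)) = add x (neg x) :=
    fun x => by rw [haddassoc, ← haddassoc (neg x), hneg₂]
  -- λ is additive
  have LA : ∀ x a b : S, add (neg x) (mul x (add a b))
      = add (add (neg x) (mul x a)) (add (neg x) (mul x b)) :=
    fun x a b => by rw [hdist]; simp only [haddassoc]
  have LN : ∀ x y : S, add (neg x) (mul x (neg y)) = neg (add (neg x) (mul x y)) :=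
    fun x y => by
      refine hneguniq (add (neg x) (mul x y)) (add (neg x) (mul x (neg y))) ?_ ?_
      · rw [← LA, ← LA, hneg₁]
      · rw [← LA, ← LA, hneg₂]
  -- the key identity  e + f + e = e  with e = -x+x, f = x+(-x)
  have KEY : ∀ x : S,
      add (add (add (neg x) x) (add x (neg x))) (add (neg x) x) = add (neg x) x := by
    intro x
    have he_mul : mul (mul x (inv x)) (mul x (inv x)) = mul x (inv x) := by
      rw [← hmulassoc, hinv₁]
    have hxinv_e : mul (inv x) (mul x (inv x)) = inv x := by
      rw [← hmulassoc, hinv₂]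
    have way1 : mul x (mul (inv x) (add (mul x (inv x)) (mul x (inv x))))
        = mul x (inv x) := by
      rw [hdist, hxinv_e, hneg₁]
    have way2 : mul x (mul (inv x) (add (mul x (inv x)) (mul x (inv x))))
        = add (add (add (neg x) x) (add x (neg x))) (add (neg x) x) := by
      calc mul x (mul (inv x) (add (mul x (inv x)) (mul x (inv x))))
          = mul x (add (add (mul (inv x) (mul x (inv x))) (neg (inv x)))
              (mul (inv x) (mul x (inv x)))) := by rw [hdist]
        _ = add (add (mul x (add (mul (inv x) (mul x (inv x))) (neg (inv x)))) (neg x))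
              (mul x (mul (inv x) (mul x (inv x)))) := hdist x _ _
        _ = add (add (add (add (mul x (mul (inv x) (mul x (inv x)))) (neg x))
                (mul x (neg (inv x)))) (neg x))
              (mul x (mul (inv x) (mul x (inv x)))) := by
            rw [hdist x (mul (inv x) (mul x (inv x))) (neg (inv x))]
        _ = add (add (add (add (mul x (inv x)) (neg x)) (mul x (neg (inv x)))) (neg x))
              (mul x (inv x)) := by rw [← hmulassoc, he_mul]
        _ = add (add (add (mul x (inv x)) (add (neg x) (mul x (neg (inv x))))) (neg x))
              (mul x (inv x)) := by rw [haddassoc (mul x (inv x))]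
        _ = add (add (add (mul x (inv x)) (neg (add (neg x) (mul x (inv x))))) (neg x))
              (mul x (inv x)) := by rw [LN]
        _ = add (add (add (add (neg x) x) (neg (add (neg x) (add (neg x) x)))) (neg x))
              (add (neg x) x) := by rw [hbrace]
        _ = add (add (add (add (neg x) x) (add (add (neg x) x) x)) (neg x))
              (add (neg x) x) := by
            rw [NA (neg x) (add (neg x) x), NN, NI _ (EI x)]
        _ = add (add (add (add (add (neg x) x) (add (neg x) x)) x) (neg x))
              (add (neg x) x) := by rw [haddassoc (add (neg x) x) (add (neg x) x) x]
        _ = add (add (add (add (neg x) x) x) (neg x)) (add (neg x) x) := by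
            rw [EI x]
        _ = add (add (add (neg x) x) (add x (neg x))) (add (neg x) x) := by
            rw [haddassoc (add (neg x) x) x (neg x)]
    have := way1.symm.trans way2
    rw [hbrace] at this
    exact this.symm
  -- (S,+) is Clifford
  have CLIF : ∀ x : S, add x (neg x) = add (neg x) x := by
    have A : ∀ y : S, add (neg y) y = add (add y (neg y)) (add (neg y) y) := by
      intro y
      calc add (neg y) y
          = add (add (add (neg y) y) (add y (neg y))) (add (neg y) y) := (KEY y).symm
        _ = add (add (add y (neg y)) (add (neg y) y)) (add (neg y) y) := by
            rw [ACOMM (add (neg y) y) (add y (neg y)) (EI y) (FI y)]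
        _ = add (add y (neg y)) (add (add (neg y) y) (add (neg y) y)) := by
            rw [haddassoc]
        _ = add (add y (neg y)) (add (neg y) y) := by rw [EI y]
    intro x
    have B : add x (neg x) = add (add (neg x) x) (add x (neg x)) := by
      have := A (neg x)
      rwa [NN x] at this
    calc add x (neg x)
        = add (add (neg x) x) (add x (neg x)) := B
      _ = add (add x (neg x)) (add (neg x) x) :=
          ACOMM (add (neg x) x) (add x (neg x)) (EI x) (FI x)
      _ = add (neg x) x := (A x).symm
  -- Clifford consequences
  have Z2 : ∀ x : S, add (add (neg x) x) x = x := fun x => by rw [← CLIF, hneg₁]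
  have Z4 : ∀ x : S, add x (add x (neg x)) = x := fun x => by
    rw [CLIF, ← haddassoc, hneg₁]
  have Z5 : ∀ x : S, add (add x (neg x)) (neg x) = neg x := fun x => by
    rw [CLIF, hneg₂]
  have BRC : ∀ x : S, mul x (inv x) = add x (neg x) := fun x => by
    rw [hbrace, ← CLIF]
  -- additive idempotent → multiplicative idempotent and back
  have AM : ∀ a : S, add a a = a → mul a a = a := by
    intro a ha
    have h : mul a (inv a) = a := by rw [hbrace, NI a ha, ha]
    calc mul a a = mul (mul a (inv a)) a := by rw [h]
      _ = a := hinv₁ a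
  have MA : ∀ a : S, mul a a = a → add a a = a := by
    intro a ha
    have h : add (neg a) a = a := by rw [← hbrace, MI a ha, ha]
    calc add a a = add (add (neg a) a) (add (neg a) a) := by rw [h]
      _ = add (neg a) a := EI a
      _ = a := h
  -- F4 : on idempotents, multiplication = addition
  have F4 : ∀ a b : S, add a a = a → add b b = b → mul a b = add a b := by
    intro a b ha hb
    have maa := AM a ha
    have mbb := AM b hb
    have aab : add (mul a b) (mul a b) = mul a b := MA _ (MIDEM a b maa mbb)
    have na := NI a ha
    have nb := NI b hb
    have mba : mul b a = mul a b := MCOMM b a mbb maa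
    have ca : add a (mul a b) = add (mul a b) a := ACOMM a (mul a b) ha aab
    have cb : add b (mul a b) = add (mul a b) b := ACOMM b (mul a b) hb aab
    have r_rawa : mul a b = add (add (mul a b) a) (mul a b) := by
      have h := hdist a b b
      rwa [hb, na] at h
    have r_a : mul a b = add (mul a b) a := by
      calc mul a b = add (add (mul a b) a) (mul a b) := r_rawa
        _ = add (mul a b) (add a (mul a b)) := haddassoc _ _ _
        _ = add (mul a b) (add (mul a b) a) := by rw [ca]
        _ = add (add (mul a b) (mul a b)) a := by rw [haddassoc]
        _ = add (mul a b) a := by rw [aab]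
    have r_rawb : mul a b = add (add (mul a b) b) (mul a b) := by
      have h := hdist b a a
      rwa [ha, nb, mba] at h
    have r_b : mul a b = add (mul a b) b := by
      calc mul a b = add (add (mul a b) b) (mul a b) := r_rawb
        _ = add (mul a b) (add b (mul a b)) := haddassoc _ _ _
        _ = add (mul a b) (add (mul a b) b) := by rw [cb]
        _ = add (add (mul a b) (mul a b)) b := by rw [haddassoc]
        _ = add (mul a b) b := by rw [aab]
    have cab : add a b = add b a := ACOMM a b ha hb
    have hg : add (add a b) (add a b) = add a b := by
      rw [haddassoc, ← haddassoc b, ← cab, haddassoc a b b, hb, ← haddassoc, ha]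
    have mgg := AM _ hg
    have ngg := NI _ hg
    have s6 : mul a (add a b) = mul a b := by
      rw [hdist, maa, na, ha, ca]
      exact r_a.symm
    have s7 : mul b (add a b) = mul a b := by
      rw [hdist, mba, nb, mbb, haddassoc, hb]
      exact r_b.symm
    have h := hdist (add a b) a b
    rw [ngg, MCOMM (add a b) a mgg maa, s6, MCOMM (add a b) b mgg mbb, s7] at h
    -- h : mul (add a b) (add a b) = add (add (mul a b) (add a b)) (mul a b)
    have s8 : add a b = add (add (mul a b) (add a b)) (mul a b) := by
      rw [← h]; exact mgg.symm
    have s9 : add (mul a b) (add a b) = mul a b := by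
      rw [← haddassoc, ← r_a, ← r_b]
    rw [s8, s9, aab]
  -- B6 : x⁰ + x·c = x·c
  have B6 : ∀ x c : S, add (add x (neg x)) (mul x c) = mul x c := by
    intro x c
    have X0 : add (add x (neg x)) (add (mul x c) (neg (mul x c)))
        = add (mul x c) (neg (mul x c)) := by
      rw [← F4 _ _ (FI x) (FI (mul x c)), ← BRC x, ← BRC (mul x c),
        ← hmulassoc, ← hmulassoc, hinv₁]
    calc add (add x (neg x)) (mul x c)
        = add (add x (neg x)) (add (add (mul x c) (neg (mul x c))) (mul x c)) := by
          rw [hneg₁]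
      _ = add (add (add x (neg x)) (add (mul x c) (neg (mul x c)))) (mul x c) := by
          rw [← haddassoc]
      _ = add (add (mul x c) (neg (mul x c))) (mul x c) := by rw [X0]
      _ = mul x c := hneg₁ _
  -- λ_x ∘ λ_y = λ_{xy}
  have LL : ∀ x y z : S, add (neg x) (mul x (add (neg y) (mul y z)))
      = add (neg (mul x y)) (mul (mul x y) z) := by
    intro x y z
    calc add (neg x) (mul x (add (neg y) (mul y z)))
        = add (neg x) (add (add (mul x (neg y)) (neg x)) (mul x (mul y z))) := by
          rw [hdist]
      _ = add (add (neg x) (mul x (neg y))) (add (neg x) (mul (mul x y) z)) := by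
          rw [← hmulassoc]; simp only [haddassoc]
      _ = add (neg (add (neg x) (mul x y))) (add (neg x) (mul (mul x y) z)) := by
          rw [LN]
      _ = add (add (neg (mul x y)) (neg (neg x))) (add (neg x) (mul (mul x y) z)) := by
          rw [NA]
      _ = add (neg (mul x y)) (add (add x (neg x)) (mul (mul x y) z)) := by
          rw [NN]; simp only [haddassoc]
      _ = add (neg (mul x y)) (mul (mul x y) z) := by
          have NB : add (neg (mul x y)) (add x (neg x)) = neg (mul x y) := by
            have hh := congrArg neg (B6 x y)
            rwa [NA, NI _ (FI x)] at hh
          rw [← haddassoc, NB]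
  -- idempotents are central in (S,+)
  have CENT : ∀ e a : S, add e e = e → add a e = add e a := by
    intro e a he
    have ne := NI e he
    have hb := CLIF (add e a)
    rw [NA e a, ne] at hb
    have l : add (add e a) (add (neg a) e) = add e (add a (neg a)) := by
      rw [haddassoc, ← haddassoc a, ACOMM (add a (neg a)) e (FI a) he,
        ← haddassoc, he]
    have r : add (add (neg a) e) (add e a) = add (neg a) (add e a) := by
      rw [haddassoc, ← haddassoc e, he]
    have c1 : add e (add a (neg a)) = add (neg a) (add e a) :=
      l.symm.trans (hb.trans r)
    have st1 : add (add a (add a (neg a))) e = add a e := by rw [Z4]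
    calc add a e
        = add (add a (add a (neg a))) e := st1.symm
      _ = add a (add (add a (neg a)) e) := haddassoc _ _ _
      _ = add a (add e (add a (neg a))) := by
          rw [ACOMM (add a (neg a)) e (FI a) he]
      _ = add a (add (neg a) (add e a)) := by rw [c1]
      _ = add (add a (neg a)) (add e a) := by rw [← haddassoc]
      _ = add (add (add a (neg a)) e) a := by rw [← haddassoc]
      _ = add (add e (add a (neg a))) a := by
          rw [ACOMM (add a (neg a)) e (FI a) he]
      _ = add e (add (add a (neg a)) a) := haddassoc _ _ _
      _ = add e a := by rw [hneg₁]
  -- now the seven goals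
  refine ⟨fun x a b => LA x a b, fun x y z => ?_, fun x => ?_, fun x y => ?_,
    fun x => ?_, fun x => ⟨?_, ?_⟩, fun e f he hf => ?_⟩
  · -- F1 composition
    show add (neg x) (mul x (add (neg y) (mul y z)))
      = add (neg (add x (add (neg x) (mul x y))))
          (mul (add x (add (neg x) (mul x y))) z)
    have W : add x (add (neg x) (mul x y)) = mul x y := by
      rw [← haddassoc, B6]
    rw [W]
    exact LL x y z
  · -- γ_{x⁰}(x) = x
    show add (neg (add x (neg x))) (mul (add x (neg x)) x) = x
    have m0 : mul (add x (neg x)) x = x := by rw [← BRC, hinv₁]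
    rw [NI _ (FI x), m0]
    exact hneg₁ x
  · -- x⁰ + γ_x(y) = γ_x(y)
    show add (add x (neg x)) (add (neg x) (mul x y)) = add (neg x) (mul x y)
    rw [← haddassoc, Z5]
  · -- F2
    intro h
    replace h : add (neg x) (mul x x) = add x (neg x) := h
    show x = add x (neg x)
    have i1 : add (add x (neg x)) (mul x x) = x := by
      have h2 := congrArg (add x) h
      rwa [← haddassoc, Z4] at h2
    have l := LL x x x
    rw [h] at l
    have l2 : add (neg x) (mul x (add x (neg x))) = add x (neg x) := by
      rw [LA x x (neg x), LN x x, h, NI _ (FI x)]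
      exact FI x
    have iv : add (neg (mul x x)) (mul (mul x x) x) = add x (neg x) :=
      l.symm.trans l2
    have v : mul (mul x x) x = x := by
      calc mul (mul x x) x
          = add (add (mul x x) (neg (mul x x))) (mul (mul x x) x) :=
            (B6 (mul x x) x).symm
        _ = add (mul x x) (add (neg (mul x x)) (mul (mul x x) x)) :=
            haddassoc _ _ _
        _ = add (mul x x) (add x (neg x)) := by rw [iv]
        _ = add (add x (neg x)) (mul x x) := CENT _ _ (FI x)
        _ = x := i1
    have invx : inv x = x := (hinvuniq x x v v).symm
    have xx : mul x x = add x (neg x) := by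
      calc mul x x = mul x (inv x) := by rw [invx]
        _ = add x (neg x) := BRC x
    calc x = add (add x (neg x)) (mul x x) := i1.symm
      _ = add (add x (neg x)) (add x (neg x)) := by rw [xx]
      _ = add x (neg x) := FI x
  · -- F3 first
    show add (neg x) (mul x (inv x)) = neg x
    rw [hbrace, ← CLIF, ← haddassoc, hneg₂]
  · -- F3 second
    show add (neg (inv x)) (mul (inv x) x) = neg (inv x)
    have hb2 := hbrace (inv x)
    rw [II x] at hb2
    rw [hb2, ← CLIF (inv x), ← haddassoc, hneg₂]
  · -- F4
    show add (neg e) (mul e f) = add e f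
    rw [NI e he, F4 e f he hf, ← haddassoc, he]
end

section
/- Every dual Gamma function on a Clifford semigroup is a Gamma function; in particular, from axioms (D1)–(D3) one can derive γ_{x^0}(x) = x, injectivity-based condition (F2), and the existence of x⁻¹ = γ_x⁻¹(-x) with γ_x(x⁻¹) = -x and γ_{x⁻¹}(x) = -x⁻¹. -/
/-- Every dual Gamma function `γ` on a Clifford semigroup `(S,+)` is a Gamma function:
from (D1)–(D3) one derives `γ_{x^0}(x) = x`, condition (F2), and the existence of an
element `x⁻¹` (namely the preimage of `-x` under `γ_x` restricted to `H_x`) with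
`γ_x(x⁻¹) = -x` and `γ_{x⁻¹}(x) = -x⁻¹`. -/
theorem dual_gamma_function_is_gamma_function
    {S : Type*} (add : S → S → S) (neg : S → S) (gam : S → S → S)
    (haddassoc : ∀ a b c : S, add (add a b) c = add a (add b c))
    (hneg₁ : ∀ a : S, add (add a (neg a)) a = a)
    (hneg₂ : ∀ a : S, add (add (neg a) a) (neg a) = neg a)
    (hneguniq : ∀ a b : S, add (add a b) a = a → add (add b a) b = b → b = neg a)
    (hcliff : ∀ a : S, add (neg a) a = add a (neg a))
    (hend : ∀ x a b : S, gam x (add a b) = add (gam x a) (gam x b))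
    -- (D1): the restriction of `γ_x` to `H_x` is an automorphism of `(H_x,+)`
    (hD1into : ∀ x a : S, add a (neg a) = add x (neg x) →
      add (gam x a) (neg (gam x a)) = add x (neg x))
    (hD1inj : ∀ x a b : S, add a (neg a) = add x (neg x) →
      add b (neg b) = add x (neg x) → gam x a = gam x b → a = b)
    (hD1surj : ∀ x b : S, add b (neg b) = add x (neg x) →
      ∃ a : S, add a (neg a) = add x (neg x) ∧ gam x a = b)
    -- (D2)
    (hD2a : ∀ x y z : S, gam x (gam y z) = gam (add x (gam x y)) z)
    (hD2b : ∀ x y : S, add (add x (neg x)) (gam x y) = gam x y)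
    -- (D3)
    (hD3 : ∀ e f : S, add e e = e → add f f = f → gam e f = add e f) :
    (∀ x : S, gam (add x (neg x)) x = x) ∧
    (∀ x : S, gam x x = add x (neg x) → x = add x (neg x)) ∧
    (∀ x : S, ∃ xi : S, add xi (neg xi) = add x (neg x) ∧
      gam x xi = neg x ∧ gam xi x = neg xi) := by
  -- x + x⁰ = x
  have hex : ∀ x : S, add x (add x (neg x)) = x := by
    intro x
    rw [← hcliff, ← haddassoc, hneg₁]
  -- neg (neg x) = x
  have negneg : ∀ x : S, neg (neg x) = x := by
    intro x
    exact (hneguniq (neg x) x (hneg₂ x) (hneg₁ x)).symm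
  -- x⁰ is idempotent
  have hidem : ∀ x : S, add (add x (neg x)) (add x (neg x)) = add x (neg x) := by
    intro x
    rw [haddassoc, ← haddassoc (neg x), hneg₂]
  -- neg x⁰ = x⁰
  have hnegzero : ∀ x : S, neg (add x (neg x)) = add x (neg x) := by
    intro x
    refine (hneguniq _ _ ?_ ?_).symm <;> rw [hidem, hidem]
  -- (x⁰)⁰ = x⁰
  have hzz : ∀ x : S, add (add x (neg x)) (neg (add x (neg x))) = add x (neg x) := by
    intro x; rw [hnegzero, hidem]
  -- (-x)⁰ = x⁰
  have hnz : ∀ x : S, add (neg x) (neg (neg x)) = add x (neg x) := by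
    intro x; rw [negneg, hcliff]
  -- γ_x commutes with neg
  have hgamneg : ∀ x a : S, gam x (neg a) = neg (gam x a) := by
    intro x a
    refine hneguniq (gam x a) (gam x (neg a)) ?_ ?_
    · rw [← hend, ← hend, hneg₁]
    · rw [← hend, ← hend, hneg₂]
  -- (F1)
  have hF1 : ∀ x : S, gam (add x (neg x)) x = x := by
    intro x
    have h1 : add x (neg x) = add (add x (neg x)) (neg (add x (neg x))) := (hzz x).symm
    have h2 := hD1into (add x (neg x)) x h1
    have hgee : gam (add x (neg x)) (add x (neg x)) = add x (neg x) := by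
      rw [hD3 _ _ (hidem x) (hidem x), hidem]
    have h3 : gam (add x (neg x)) (gam (add x (neg x)) x) = gam (add x (neg x)) x := by
      rw [hD2a, hgee, hidem]
    exact hD1inj (add x (neg x)) (gam (add x (neg x)) x) x h2 h1 h3
  refine ⟨hF1, ?_, ?_⟩
  · -- (F2)
    intro x hxx
    have h2 := hD1into x x rfl
    have h3 : gam x (gam x x) = gam x x := by
      rw [hD2a, hxx, hex]; exact hxx
    have h4 : gam x x = x := hD1inj x (gam x x) x h2 rfl h3
    exact h4.symm.trans hxx
  · -- (F3)
    intro x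
    obtain ⟨xi, hxi0, hxig⟩ := hD1surj x (neg x) (hnz x)
    refine ⟨xi, hxi0, hxig, ?_⟩
    -- (γ_xi x)⁰ = x⁰
    have h1 : add (gam xi x) (neg (gam xi x)) = add x (neg x) := by
      rw [hD1into xi x hxi0.symm, hxi0]
    -- (-xi)⁰ = x⁰
    have h2 : add (neg xi) (neg (neg xi)) = add x (neg x) := by
      rw [hnz, hxi0]
    -- γ_x (γ_xi x) = x
    have h3 : gam x (gam xi x) = x := by
      rw [hD2a, hxig, hF1]
    -- γ_x (-xi) = x
    have h4 : gam x (neg xi) = x := by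
      rw [hgamneg, hxig, negneg]
    exact hD1inj x (gam xi x) (neg xi) h1 h2 (h3.trans h4.symm)
end

section
/- Every symmetric weak left brace (S,+,·) is a dual weak left brace; more precisely, for all x ∈ S one has -x + x = x·x⁻¹ and x + (-x) = x⁻¹·x, so both (S,+) and (S,·) are Clifford semigroups. -/
section SWLBAux

variable {S : Type*}

/-! ### Single-operation (inverse semigroup) lemmas -/

theorem swlb_o_invol (op : S → S → S) (iv : S → S)
    (i1 : ∀ a, op (op a (iv a)) a = a)
    (i2 : ∀ a, op (op (iv a) a) (iv a) = iv a)
    (iu : ∀ a b, op (op a b) a = a → op (op b a) b = b → b = iv a) :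
    ∀ a, iv (iv a) = a :=
  fun a => (iu (iv a) a (i2 a) (i1 a)).symm

theorem swlb_o_idemiv (op : S → S → S) (iv : S → S)
    (iu : ∀ a b, op (op a b) a = a → op (op b a) b = b → b = iv a) :
    ∀ p, op p p = p → iv p = p :=
  fun p hp => (iu p p (by rw [hp, hp]) (by rw [hp, hp])).symm

theorem swlb_o_r1 (op : S → S → S) (iv : S → S)
    (assoc : ∀ a b c, op (op a b) c = op a (op b c))
    (i1 : ∀ a, op (op a (iv a)) a = a) :
    ∀ a, op a (op (iv a) a) = a := fun a => by rw [← assoc, i1]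

theorem swlb_o_r2 (op : S → S → S) (iv : S → S)
    (assoc : ∀ a b c, op (op a b) c = op a (op b c))
    (i2 : ∀ a, op (op (iv a) a) (iv a) = iv a) :
    ∀ a, op (iv a) (op a (iv a)) = iv a := fun a => by rw [← assoc, i2]

theorem swlb_o_ee (op : S → S → S) (iv : S → S)
    (assoc : ∀ a b c, op (op a b) c = op a (op b c))
    (i1 : ∀ a, op (op a (iv a)) a = a) :
    ∀ a, op (op a (iv a)) (op a (iv a)) = op a (iv a) := fun a => by
  rw [← assoc, i1]

theorem swlb_o_hh (op : S → S → S) (iv : S → S)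
    (assoc : ∀ a b c, op (op a b) c = op a (op b c))
    (i2 : ∀ a, op (op (iv a) a) (iv a) = iv a) :
    ∀ a, op (op (iv a) a) (op (iv a) a) = op (iv a) a := fun a => by
  rw [← assoc, i2]

theorem swlb_o_i1x (op : S → S → S) (iv : S → S)
    (assoc : ∀ a b c, op (op a b) c = op a (op b c))
    (i1 : ∀ a, op (op a (iv a)) a = a) :
    ∀ a x, op a (op (iv a) (op a x)) = op a x := fun a x => by
  have h := congrArg (fun y => op y x) (i1 a)
  simp only [assoc] at h
  exact h

theorem swlb_o_i2x (op : S → S → S) (iv : S → S)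
    (assoc : ∀ a b c, op (op a b) c = op a (op b c))
    (i2 : ∀ a, op (op (iv a) a) (iv a) = iv a) :
    ∀ a x, op (iv a) (op a (op (iv a) x)) = op (iv a) x := fun a x => by
  have h := congrArg (fun y => op y x) (i2 a)
  simp only [assoc] at h
  exact h

theorem swlb_o_prod_idem (op : S → S → S) (iv : S → S)
    (assoc : ∀ a b c, op (op a b) c = op a (op b c))
    (i1 : ∀ a, op (op a (iv a)) a = a)
    (i2 : ∀ a, op (op (iv a) a) (iv a) = iv a)
    (iu : ∀ a b, op (op a b) a = a → op (op b a) b = b → b = iv a)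
    (p q : S) (hp : op p p = p) (hq : op q q = q) :
    op (op p q) (op p q) = op p q := by
  have hpx : ∀ x, op p (op p x) = op p x := fun x => by rw [← assoc, hp]
  have hqx : ∀ x, op q (op q x) = op q x := fun x => by rw [← assoc, hq]
  have h1 : op (op (op p q) (op q (op (iv (op p q)) p))) (op p q) = op p q := by
    have base := i1 (op p q)
    simp only [assoc] at base ⊢
    rw [hqx, hpx]
    exact base
  have base2 := congrArg (fun y => op y p) (i2 (op p q))
  simp only [assoc] at base2
  have h2 : op (op (op q (op (iv (op p q)) p)) (op p q)) (op q (op (iv (op p q)) p))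
      = op q (op (iv (op p q)) p) := by
    simp only [assoc]
    rw [hpx, hqx, base2]
  have hu : op q (op (iv (op p q)) p) = iv (op p q) := iu (op p q) _ h1 h2
  have huu : op (iv (op p q)) (iv (op p q)) = iv (op p q) := by
    calc op (iv (op p q)) (iv (op p q))
        = op (op q (op (iv (op p q)) p)) (op q (op (iv (op p q)) p)) := by rw [hu]
      _ = op q (op (iv (op p q)) (op p (op q (op (iv (op p q)) p)))) := by
          simp only [assoc]
      _ = op q (op (iv (op p q)) p) := by rw [base2]
      _ = iv (op p q) := hu
  have hiv : iv (iv (op p q)) = op p q := swlb_o_invol op iv i1 i2 iu (op p q)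
  have hpq : op p q = iv (op p q) := by
    have h3 := swlb_o_idemiv op iv iu (iv (op p q)) huu
    rw [hiv] at h3
    exact h3
  rw [hpq]
  exact huu

theorem swlb_o_comm (op : S → S → S) (iv : S → S)
    (assoc : ∀ a b c, op (op a b) c = op a (op b c))
    (i1 : ∀ a, op (op a (iv a)) a = a)
    (i2 : ∀ a, op (op (iv a) a) (iv a) = iv a)
    (iu : ∀ a b, op (op a b) a = a → op (op b a) b = b → b = iv a)
    (p q : S) (hp : op p p = p) (hq : op q q = q) :
    op p q = op q p := by
  have hpx : ∀ x, op p (op p x) = op p x := fun x => by rw [← assoc, hp]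
  have hqx : ∀ x, op q (op q x) = op q x := fun x => by rw [← assoc, hq]
  have hpq := swlb_o_prod_idem op iv assoc i1 i2 iu p q hp hq
  have hqp := swlb_o_prod_idem op iv assoc i1 i2 iu q p hq hp
  have hpqn := hpq
  have hqpn := hqp
  simp only [assoc] at hpqn hqpn
  have h5 : op (op (op p q) (op q p)) (op p q) = op p q := by
    simp only [assoc]
    rw [hqx, hpx]
    exact hpqn
  have h6 : op (op (op q p) (op p q)) (op q p) = op q p := by
    simp only [assoc]
    rw [hpx, hqx]
    exact hqpn
  have h7 := iu (op p q) (op q p) h5 h6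
  rw [h7]
  exact (swlb_o_idemiv op iv iu (op p q) hpq).symm

theorem swlb_o_ivop (op : S → S → S) (iv : S → S)
    (assoc : ∀ a b c, op (op a b) c = op a (op b c))
    (i1 : ∀ a, op (op a (iv a)) a = a)
    (i2 : ∀ a, op (op (iv a) a) (iv a) = iv a)
    (iu : ∀ a b, op (op a b) a = a → op (op b a) b = b → b = iv a) :
    ∀ a b, iv (op a b) = op (iv b) (iv a) := by
  intro a b
  have hE := swlb_o_ee op iv assoc i1 b
  have hH := swlb_o_hh op iv assoc i2 a
  have c := swlb_o_comm op iv assoc i1 i2 iu (op b (iv b)) (op (iv a) a) hE hH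
  have cX : ∀ x, op b (op (iv b) (op (iv a) (op a x)))
      = op (iv a) (op a (op b (op (iv b) x))) := by
    intro x
    have h := congrArg (fun y => op y x) c
    simp only [assoc] at h
    exact h
  have hA : op (op (op a b) (op (iv b) (iv a))) (op a b) = op a b := by
    simp only [assoc]
    rw [cX b, swlb_o_r1 op iv assoc i1 b]
    exact swlb_o_i1x op iv assoc i1 a b
  have hB : op (op (op (iv b) (iv a)) (op a b)) (op (iv b) (iv a)) = op (iv b) (iv a) := by
    simp only [assoc]
    rw [← cX (iv a), swlb_o_r2 op iv assoc i2 a]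
    exact swlb_o_i2x op iv assoc i2 b (iv a)
  exact (iu (op a b) (op (iv b) (iv a)) hA hB).symm

/-! ### Mixed (brace) lemmas, short signature -/

theorem swlb_bE (ad mu : S → S → S) (ng : S → S)
    (aas : ∀ a b c, ad (ad a b) c = ad a (ad b c))
    (n1 : ∀ a, ad (ad a (ng a)) a = a)
    (n2 : ∀ a, ad (ad (ng a) a) (ng a) = ng a)
    (nu : ∀ a b, ad (ad a b) a = a → ad (ad b a) b = b → b = ng a)
    (hd : ∀ x y z, mu x (ad y z) = ad (ad (mu x y) (ng x)) (mu x z)) :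
    ∀ a b, ad (mu a (ng b)) (ng a) = ad a (ng (mu a b)) := by
  intro a b
  have k1 : ad (ad (ad (mu a b) (ng a)) (ad (mu a (ng b)) (ng a))) (ad (mu a b) (ng a))
      = ad (mu a b) (ng a) := by
    calc ad (ad (ad (mu a b) (ng a)) (ad (mu a (ng b)) (ng a))) (ad (mu a b) (ng a))
        = ad (ad (ad (ad (ad (mu a b) (ng a)) (mu a (ng b))) (ng a)) (mu a b)) (ng a) := by
          simp only [aas]
      _ = ad (ad (ad (mu a (ad b (ng b))) (ng a)) (mu a b)) (ng a) := by
          rw [← hd a b (ng b)]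
      _ = ad (mu a (ad (ad b (ng b)) b)) (ng a) := by
          rw [← hd a (ad b (ng b)) b]
      _ = ad (mu a b) (ng a) := by rw [n1 b]
  have k2 : ad (ad (ad (mu a (ng b)) (ng a)) (ad (mu a b) (ng a))) (ad (mu a (ng b)) (ng a))
      = ad (mu a (ng b)) (ng a) := by
    calc ad (ad (ad (mu a (ng b)) (ng a)) (ad (mu a b) (ng a))) (ad (mu a (ng b)) (ng a))
        = ad (ad (ad (ad (ad (mu a (ng b)) (ng a)) (mu a b)) (ng a)) (mu a (ng b))) (ng a) := by
          simp only [aas]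
      _ = ad (ad (ad (mu a (ad (ng b) b)) (ng a)) (mu a (ng b))) (ng a) := by
          rw [← hd a (ng b) b]
      _ = ad (mu a (ad (ad (ng b) b) (ng b))) (ng a) := by
          rw [← hd a (ad (ng b) b) (ng b)]
      _ = ad (mu a (ng b)) (ng a) := by rw [n2 b]
  have hk := nu (ad (mu a b) (ng a)) (ad (mu a (ng b)) (ng a)) k1 k2
  rw [hk, swlb_o_ivop ad ng aas n1 n2 nu (mu a b) (ng a), swlb_o_invol ad ng n1 n2 nu a]

theorem swlb_bEl (ad mu : S → S → S) (ng : S → S)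
    (aas : ∀ a b c, ad (ad a b) c = ad a (ad b c))
    (n1 : ∀ a, ad (ad a (ng a)) a = a)
    (n2 : ∀ a, ad (ad (ng a) a) (ng a) = ng a)
    (nu : ∀ a b, ad (ad a b) a = a → ad (ad b a) b = b → b = ng a)
    (hd : ∀ x y z, mu x (ad y z) = ad (ad (mu x y) (ng x)) (mu x z)) :
    ∀ a b, ad (ng a) (mu a (ng b)) = ad (ng (mu a b)) a := by
  intro a b
  have k1 : ad (ad (ad (ng a) (mu a b)) (ad (ng a) (mu a (ng b)))) (ad (ng a) (mu a b))
      = ad (ng a) (mu a b) := by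
    calc ad (ad (ad (ng a) (mu a b)) (ad (ng a) (mu a (ng b)))) (ad (ng a) (mu a b))
        = ad (ad (ng a) (ad (ad (mu a b) (ng a)) (mu a (ng b)))) (ad (ng a) (mu a b)) := by
          simp only [aas]
      _ = ad (ad (ng a) (mu a (ad b (ng b)))) (ad (ng a) (mu a b)) := by
          rw [← hd a b (ng b)]
      _ = ad (ng a) (ad (ad (mu a (ad b (ng b))) (ng a)) (mu a b)) := by
          simp only [aas]
      _ = ad (ng a) (mu a (ad (ad b (ng b)) b)) := by
          rw [← hd a (ad b (ng b)) b]
      _ = ad (ng a) (mu a b) := by rw [n1 b]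
  have k2 : ad (ad (ad (ng a) (mu a (ng b))) (ad (ng a) (mu a b))) (ad (ng a) (mu a (ng b)))
      = ad (ng a) (mu a (ng b)) := by
    calc ad (ad (ad (ng a) (mu a (ng b))) (ad (ng a) (mu a b))) (ad (ng a) (mu a (ng b)))
        = ad (ad (ng a) (ad (ad (mu a (ng b)) (ng a)) (mu a b))) (ad (ng a) (mu a (ng b))) := by
          simp only [aas]
      _ = ad (ad (ng a) (mu a (ad (ng b) b))) (ad (ng a) (mu a (ng b))) := by
          rw [← hd a (ng b) b]
      _ = ad (ng a) (ad (ad (mu a (ad (ng b) b)) (ng a)) (mu a (ng b))) := by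
          simp only [aas]
      _ = ad (ng a) (mu a (ad (ad (ng b) b) (ng b))) := by
          rw [← hd a (ad (ng b) b) (ng b)]
      _ = ad (ng a) (mu a (ng b)) := by rw [n2 b]
  have hk := nu (ad (ng a) (mu a b)) (ad (ng a) (mu a (ng b))) k1 k2
  rw [hk, swlb_o_ivop ad ng aas n1 n2 nu (ng a) (mu a b), swlb_o_invol ad ng n1 n2 nu a]

theorem swlb_bC (ad mu : S → S → S) (ng : S → S)
    (aas : ∀ a b c, ad (ad a b) c = ad a (ad b c))
    (n1 : ∀ a, ad (ad a (ng a)) a = a)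
    (n2 : ∀ a, ad (ad (ng a) a) (ng a) = ng a)
    (nu : ∀ a b, ad (ad a b) a = a → ad (ad b a) b = b → b = ng a)
    (hd : ∀ x y z, mu x (ad y z) = ad (ad (mu x y) (ng x)) (mu x z)) :
    ∀ a b, mu a (ng b) = ad (ad a (ng (mu a b))) (mu a (ad b (ng b))) := by
  intro a b
  have h0 : ad (ng b) (ad b (ng b)) = ng b := by rw [← aas (ng b) b (ng b), n2 b]
  calc mu a (ng b) = mu a (ad (ng b) (ad b (ng b))) := by rw [h0]
    _ = ad (ad (mu a (ng b)) (ng a)) (mu a (ad b (ng b))) := hd a (ng b) (ad b (ng b))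
    _ = ad (ad a (ng (mu a b))) (mu a (ad b (ng b))) := by
        rw [swlb_bE ad mu ng aas n1 n2 nu hd a b]

/-! ### Full-signature lemmas -/

theorem swlb_bKey1 (ad mu : S → S → S) (ng iv : S → S)
    (aas : ∀ a b c, ad (ad a b) c = ad a (ad b c))
    (mas : ∀ a b c, mu (mu a b) c = mu a (mu b c))
    (n1 : ∀ a, ad (ad a (ng a)) a = a)
    (n2 : ∀ a, ad (ad (ng a) a) (ng a) = ng a)
    (nu : ∀ a b, ad (ad a b) a = a → ad (ad b a) b = b → b = ng a)
    (i1 : ∀ a, mu (mu a (iv a)) a = a)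
    (i2 : ∀ a, mu (mu (iv a) a) (iv a) = iv a)
    (iu : ∀ a b, mu (mu a b) a = a → mu (mu b a) b = b → b = iv a)
    (hd : ∀ x y z, mu x (ad y z) = ad (ad (mu x y) (ng x)) (mu x z))
    (hs : ∀ x y z, ad x (mu y z) = mu (mu (ad x y) (iv x)) (ad x z)) :
    ∀ e, mu e e = e → ad e e = e := by
  intro e he
  have hive : iv e = e := swlb_o_idemiv mu iv iu e he
  have het : mu e (ad e e) = e := by
    rw [hd e e e, he]
    exact n1 e
  have htet : ad e e = mu (mu (ad e e) e) (ad e e) := by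
    have h := hs e e e
    rw [he, hive] at h
    exact h
  have hte : mu (ad e e) e = ad e e := by
    have h1 : ad e e = mu (ad e e) e := by
      calc ad e e = mu (mu (ad e e) e) (ad e e) := htet
        _ = mu (ad e e) (mu e (ad e e)) := mas _ _ _
        _ = mu (ad e e) e := by rw [het]
    exact h1.symm
  have htt : mu (ad e e) (ad e e) = ad e e := by
    calc mu (ad e e) (ad e e) = mu (mu (ad e e) e) (ad e e) := by rw [hte]
      _ = mu (ad e e) (mu e (ad e e)) := mas _ _ _
      _ = mu (ad e e) e := by rw [het]
      _ = ad e e := hte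
  have hivt : iv (ad e e) = ad e e := swlb_o_idemiv mu iv iu _ htt
  have hC := swlb_bC mu ad iv mas i1 i2 iu hs e e
  rw [hive, he, hivt, het, het] at hC
  exact hC

theorem swlb_bL5 (ad mu : S → S → S) (ng iv : S → S)
    (aas : ∀ a b c, ad (ad a b) c = ad a (ad b c))
    (mas : ∀ a b c, mu (mu a b) c = mu a (mu b c))
    (n1 : ∀ a, ad (ad a (ng a)) a = a)
    (n2 : ∀ a, ad (ad (ng a) a) (ng a) = ng a)
    (nu : ∀ a b, ad (ad a b) a = a → ad (ad b a) b = b → b = ng a)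
    (i1 : ∀ a, mu (mu a (iv a)) a = a)
    (i2 : ∀ a, mu (mu (iv a) a) (iv a) = iv a)
    (iu : ∀ a b, mu (mu a b) a = a → mu (mu b a) b = b → b = iv a)
    (hd : ∀ x y z, mu x (ad y z) = ad (ad (mu x y) (ng x)) (mu x z))
    (hs : ∀ x y z, ad x (mu y z) = mu (mu (ad x y) (iv x)) (ad x z)) :
    ∀ a, mu (mu a (iv a)) (ad (ng a) a) = ad (mu a (iv a)) (ad (ng a) a) := by
  intro a
  calc mu (mu a (iv a)) (ad (ng a) a)
      = ad (ad (mu (mu a (iv a)) (ng a)) (ng (mu a (iv a)))) (mu (mu a (iv a)) a) :=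
        hd _ _ _
    _ = ad (ad (mu (mu a (iv a)) (ng a)) (ng (mu a (iv a)))) a := by rw [i1 a]
    _ = ad (ad (mu a (iv a)) (ng (mu (mu a (iv a)) a))) a := by
        rw [swlb_bE ad mu ng aas n1 n2 nu hd (mu a (iv a)) a]
    _ = ad (ad (mu a (iv a)) (ng a)) a := by rw [i1 a]
    _ = ad (mu a (iv a)) (ad (ng a) a) := aas _ _ _

theorem swlb_bL4 (ad mu : S → S → S) (ng iv : S → S)
    (aas : ∀ a b c, ad (ad a b) c = ad a (ad b c))
    (mas : ∀ a b c, mu (mu a b) c = mu a (mu b c))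
    (n1 : ∀ a, ad (ad a (ng a)) a = a)
    (n2 : ∀ a, ad (ad (ng a) a) (ng a) = ng a)
    (nu : ∀ a b, ad (ad a b) a = a → ad (ad b a) b = b → b = ng a)
    (i1 : ∀ a, mu (mu a (iv a)) a = a)
    (i2 : ∀ a, mu (mu (iv a) a) (iv a) = iv a)
    (iu : ∀ a b, mu (mu a b) a = a → mu (mu b a) b = b → b = iv a)
    (hd : ∀ x y z, mu x (ad y z) = ad (ad (mu x y) (ng x)) (mu x z))
    (hs : ∀ x y z, ad x (mu y z) = mu (mu (ad x y) (iv x)) (ad x z)) :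
    ∀ a, mu (mu a (iv a)) (ad (ng a) a) = ad (ng a) a := by
  intro a
  have hee_m := swlb_o_ee mu iv mas i1 a
  have hee_a : ad (mu a (iv a)) (mu a (iv a)) = mu a (iv a) :=
    swlb_bKey1 ad mu ng iv aas mas n1 n2 nu i1 i2 iu hd hs _ hee_m
  have hne : ng (mu a (iv a)) = mu a (iv a) := swlb_o_idemiv ad ng nu _ hee_a
  have hgg := swlb_o_hh ad ng aas n2 a
  have hag : ad a (ad (ng a) a) = a := by rw [← aas a (ng a) a, n1 a]
  have hL5 := swlb_bL5 ad mu ng iv aas mas n1 n2 nu i1 i2 iu hd hs a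
  have hS1 : a = ad (ad a (mu a (iv a))) (mu (mu a (iv a)) (ad (ng a) a)) := by
    have h := hd (mu a (iv a)) a (ad (ng a) a)
    rw [hag] at h
    rw [i1 a] at h
    rw [hne] at h
    exact h
  have hS1' : a = ad a (ad (mu a (iv a)) (ad (ng a) a)) := by
    calc a = ad (ad a (mu a (iv a))) (mu (mu a (iv a)) (ad (ng a) a)) := hS1
      _ = ad (ad a (mu a (iv a))) (ad (mu a (iv a)) (ad (ng a) a)) := by rw [hL5]
      _ = ad a (ad (mu a (iv a)) (ad (mu a (iv a)) (ad (ng a) a))) := aas _ _ _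
      _ = ad a (ad (ad (mu a (iv a)) (mu a (iv a))) (ad (ng a) a)) := by
          rw [← aas (mu a (iv a)) (mu a (iv a)) (ad (ng a) a)]
      _ = ad a (ad (mu a (iv a)) (ad (ng a) a)) := by rw [hee_a]
  have hg2 : ad (ng a) a = ad (ad (ng a) a) (ad (mu a (iv a)) (ad (ng a) a)) := by
    calc ad (ng a) a
        = ad (ng a) (ad a (ad (mu a (iv a)) (ad (ng a) a))) := congrArg (ad (ng a)) hS1'
      _ = ad (ad (ng a) a) (ad (mu a (iv a)) (ad (ng a) a)) := (aas _ _ _).symm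
  have hcomm := swlb_o_comm ad ng aas n1 n2 nu (mu a (iv a)) (ad (ng a) a) hee_a hgg
  have hge : ad (ad (ng a) a) (mu a (iv a)) = ad (ng a) a := by
    have h : ad (ng a) a = ad (ad (ng a) a) (mu a (iv a)) := by
      calc ad (ng a) a
          = ad (ad (ng a) a) (ad (mu a (iv a)) (ad (ng a) a)) := hg2
        _ = ad (ad (ng a) a) (ad (ad (ng a) a) (mu a (iv a))) := by rw [hcomm]
        _ = ad (ad (ad (ng a) a) (ad (ng a) a)) (mu a (iv a)) := (aas _ _ _).symm
        _ = ad (ad (ng a) a) (mu a (iv a)) := by rw [hgg]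
    exact h.symm
  calc mu (mu a (iv a)) (ad (ng a) a) = ad (mu a (iv a)) (ad (ng a) a) := hL5
    _ = ad (ad (ng a) a) (mu a (iv a)) := hcomm
    _ = ad (ng a) a := hge

theorem swlb_bL6 (ad mu : S → S → S) (ng iv : S → S)
    (aas : ∀ a b c, ad (ad a b) c = ad a (ad b c))
    (mas : ∀ a b c, mu (mu a b) c = mu a (mu b c))
    (n1 : ∀ a, ad (ad a (ng a)) a = a)
    (n2 : ∀ a, ad (ad (ng a) a) (ng a) = ng a)
    (nu : ∀ a b, ad (ad a b) a = a → ad (ad b a) b = b → b = ng a)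
    (i1 : ∀ a, mu (mu a (iv a)) a = a)
    (i2 : ∀ a, mu (mu (iv a) a) (iv a) = iv a)
    (iu : ∀ a b, mu (mu a b) a = a → mu (mu b a) b = b → b = iv a)
    (hd : ∀ x y z, mu x (ad y z) = ad (ad (mu x y) (ng x)) (mu x z))
    (hs : ∀ x y z, ad x (mu y z) = mu (mu (ad x y) (iv x)) (ad x z)) :
    ∀ a, mu (iv a) (ad (ng a) a) = ad (iv a) (mu (iv a) a) := by
  intro a
  have hhh_m := swlb_o_hh mu iv mas i2 a
  have hhh_a : ad (mu (iv a) a) (mu (iv a) a) = mu (iv a) a :=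
    swlb_bKey1 ad mu ng iv aas mas n1 n2 nu i1 i2 iu hd hs _ hhh_m
  have hnh : ng (mu (iv a) a) = mu (iv a) a := swlb_o_idemiv ad ng nu _ hhh_a
  calc mu (iv a) (ad (ng a) a)
      = ad (ad (mu (iv a) (ng a)) (ng (iv a))) (mu (iv a) a) := hd _ _ _
    _ = ad (ad (iv a) (ng (mu (iv a) a))) (mu (iv a) a) := by
        rw [swlb_bE ad mu ng aas n1 n2 nu hd (iv a) a]
    _ = ad (ad (iv a) (mu (iv a) a)) (mu (iv a) a) := by rw [hnh]
    _ = ad (iv a) (ad (mu (iv a) a) (mu (iv a) a)) := aas _ _ _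
    _ = ad (iv a) (mu (iv a) a) := by rw [hhh_a]

theorem swlb_bG2 (ad mu : S → S → S) (ng iv : S → S)
    (aas : ∀ a b c, ad (ad a b) c = ad a (ad b c))
    (mas : ∀ a b c, mu (mu a b) c = mu a (mu b c))
    (n1 : ∀ a, ad (ad a (ng a)) a = a)
    (n2 : ∀ a, ad (ad (ng a) a) (ng a) = ng a)
    (nu : ∀ a b, ad (ad a b) a = a → ad (ad b a) b = b → b = ng a)
    (i1 : ∀ a, mu (mu a (iv a)) a = a)
    (i2 : ∀ a, mu (mu (iv a) a) (iv a) = iv a)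
    (iu : ∀ a b, mu (mu a b) a = a → mu (mu b a) b = b → b = iv a)
    (hd : ∀ x y z, mu x (ad y z) = ad (ad (mu x y) (ng x)) (mu x z))
    (hs : ∀ x y z, ad x (mu y z) = mu (mu (ad x y) (iv x)) (ad x z)) :
    ∀ a, ad a (ng a) = mu (iv a) a := by
  intro a
  have hB := swlb_bL6 mu ad iv ng mas aas i1 i2 iu n1 n2 nu hs hd (ng a)
  rw [swlb_o_invol ad ng n1 n2 nu a] at hB
  have hC := hs a (ng a) (mu (iv (ng a)) (ng a))
  rw [swlb_o_r1 mu iv mas i1 (ng a)] at hC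
  rw [hB] at hC
  have hC' : ad a (ng a) = mu (ad a (ng a)) (mu (mu (iv a) a) (ad a (ng a))) := by
    calc ad a (ng a) = mu (mu (ad a (ng a)) (iv a)) (mu a (ad a (ng a))) := hC
      _ = mu (ad a (ng a)) (mu (iv a) (mu a (ad a (ng a)))) := mas _ _ _
      _ = mu (ad a (ng a)) (mu (mu (iv a) a) (ad a (ng a))) := by
          rw [← mas (iv a) a (ad a (ng a))]
  have hD1 := swlb_bL4 mu ad iv ng mas aas i1 i2 iu n1 n2 nu hs hd a
  have hD2 := swlb_bL5 mu ad iv ng mas aas i1 i2 iu n1 n2 nu hs hd a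
  have hFh : mu (ad a (ng a)) (mu (iv a) a) = mu (iv a) a := by
    rw [← hD2]
    exact hD1
  have hFF_a := swlb_o_ee ad ng aas n1 a
  have hFF_m : mu (ad a (ng a)) (ad a (ng a)) = ad a (ng a) :=
    swlb_bKey1 mu ad iv ng mas aas i1 i2 iu n1 n2 nu hs hd _ hFF_a
  have hhh_m := swlb_o_hh mu iv mas i2 a
  have hcm := swlb_o_comm mu iv mas i1 i2 iu (mu (iv a) a) (ad a (ng a)) hhh_m hFF_m
  calc ad a (ng a) = mu (ad a (ng a)) (mu (mu (iv a) a) (ad a (ng a))) := hC'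
    _ = mu (ad a (ng a)) (mu (ad a (ng a)) (mu (iv a) a)) := by rw [hcm]
    _ = mu (mu (ad a (ng a)) (ad a (ng a))) (mu (iv a) a) := (mas _ _ _).symm
    _ = mu (ad a (ng a)) (mu (iv a) a) := by rw [hFF_m]
    _ = mu (iv a) a := hFh

theorem swlb_b2 (ad mu : S → S → S) (ng iv : S → S)
    (aas : ∀ a b c, ad (ad a b) c = ad a (ad b c))
    (mas : ∀ a b c, mu (mu a b) c = mu a (mu b c))
    (n1 : ∀ a, ad (ad a (ng a)) a = a)
    (n2 : ∀ a, ad (ad (ng a) a) (ng a) = ng a)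
    (nu : ∀ a b, ad (ad a b) a = a → ad (ad b a) b = b → b = ng a)
    (i1 : ∀ a, mu (mu a (iv a)) a = a)
    (i2 : ∀ a, mu (mu (iv a) a) (iv a) = iv a)
    (iu : ∀ a b, mu (mu a b) a = a → mu (mu b a) b = b → b = iv a)
    (hd : ∀ x y z, mu x (ad y z) = ad (ad (mu x y) (ng x)) (mu x z))
    (hs : ∀ x y z, ad x (mu y z) = mu (mu (ad x y) (iv x)) (ad x z)) :
    ∀ a, ad (mu a (iv a)) (ad a (ng a)) = ad (ng a) a := by
  intro a
  have hee_m := swlb_o_ee mu iv mas i1 a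
  have hee_a : ad (mu a (iv a)) (mu a (iv a)) = mu a (iv a) :=
    swlb_bKey1 ad mu ng iv aas mas n1 n2 nu i1 i2 iu hd hs _ hee_m
  have hne : ng (mu a (iv a)) = mu a (iv a) := swlb_o_idemiv ad ng nu _ hee_a
  have hEi := swlb_bE ad mu ng aas n1 n2 nu hd a (iv a)
  rw [hne] at hEi
  have hEl := swlb_bEl ad mu ng aas n1 n2 nu hd a (iv a)
  rw [hne] at hEl
  have hgg := swlb_o_hh ad ng aas n2 a
  have hcomm := swlb_o_comm ad ng aas n1 n2 nu (ad (ng a) a) (mu a (iv a)) hgg hee_a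
  calc ad (mu a (iv a)) (ad a (ng a))
      = ad (ad (mu a (iv a)) a) (ng a) := (aas _ _ _).symm
    _ = ad (ad (ng a) (mu a (ng (iv a)))) (ng a) := by rw [← hEl]
    _ = ad (ng a) (ad (mu a (ng (iv a))) (ng a)) := aas _ _ _
    _ = ad (ng a) (ad a (mu a (iv a))) := by rw [hEi]
    _ = ad (ad (ng a) a) (mu a (iv a)) := (aas _ _ _).symm
    _ = ad (mu a (iv a)) (ad (ng a) a) := hcomm
    _ = mu (mu a (iv a)) (ad (ng a) a) :=
        (swlb_bL5 ad mu ng iv aas mas n1 n2 nu i1 i2 iu hd hs a).symm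
    _ = ad (ng a) a := swlb_bL4 ad mu ng iv aas mas n1 n2 nu i1 i2 iu hd hs a

theorem swlb_b3 (ad mu : S → S → S) (ng iv : S → S)
    (aas : ∀ a b c, ad (ad a b) c = ad a (ad b c))
    (mas : ∀ a b c, mu (mu a b) c = mu a (mu b c))
    (n1 : ∀ a, ad (ad a (ng a)) a = a)
    (n2 : ∀ a, ad (ad (ng a) a) (ng a) = ng a)
    (nu : ∀ a b, ad (ad a b) a = a → ad (ad b a) b = b → b = ng a)
    (i1 : ∀ a, mu (mu a (iv a)) a = a)
    (i2 : ∀ a, mu (mu (iv a) a) (iv a) = iv a)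
    (iu : ∀ a b, mu (mu a b) a = a → mu (mu b a) b = b → b = iv a)
    (hd : ∀ x y z, mu x (ad y z) = ad (ad (mu x y) (ng x)) (mu x z))
    (hs : ∀ x y z, ad x (mu y z) = mu (mu (ad x y) (iv x)) (ad x z)) :
    ∀ a, mu (mu a (iv a)) (ad a (ng a)) = ad (ad a (ng a)) (mu a (iv a)) := by
  intro a
  have hee_m := swlb_o_ee mu iv mas i1 a
  have hee_a : ad (mu a (iv a)) (mu a (iv a)) = mu a (iv a) :=
    swlb_bKey1 ad mu ng iv aas mas n1 n2 nu i1 i2 iu hd hs _ hee_m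
  have hne : ng (mu a (iv a)) = mu a (iv a) := swlb_o_idemiv ad ng nu _ hee_a
  have hEl := swlb_bEl ad mu ng aas n1 n2 nu hd (mu a (iv a)) a
  rw [hne, i1 a] at hEl
  calc mu (mu a (iv a)) (ad a (ng a))
      = ad (ad (mu (mu a (iv a)) a) (ng (mu a (iv a)))) (mu (mu a (iv a)) (ng a)) :=
        hd _ _ _
    _ = ad (ad a (mu a (iv a))) (mu (mu a (iv a)) (ng a)) := by rw [i1 a, hne]
    _ = ad a (ad (mu a (iv a)) (mu (mu a (iv a)) (ng a))) := aas _ _ _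
    _ = ad a (ad (ng a) (mu a (iv a))) := by rw [hEl]
    _ = ad (ad a (ng a)) (mu a (iv a)) := (aas _ _ _).symm

end SWLBAux

/-- Every symmetric weak left brace `(S,+,·)` is a dual weak left brace: for all `x`,
`-x + x = x·x⁻¹` and `x + (-x) = x⁻¹·x`; in particular both `(S,+)` and `(S,·)` are
Clifford semigroups. -/
theorem symmetric_weak_left_brace_is_dual
    {S : Type*} (add mul : S → S → S) (neg inv : S → S)
    (haddassoc : ∀ a b c : S, add (add a b) c = add a (add b c))
    (hmulassoc : ∀ a b c : S, mul (mul a b) c = mul a (mul b c))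
    (hneg₁ : ∀ a : S, add (add a (neg a)) a = a)
    (hneg₂ : ∀ a : S, add (add (neg a) a) (neg a) = neg a)
    (hneguniq : ∀ a b : S, add (add a b) a = a → add (add b a) b = b → b = neg a)
    (hinv₁ : ∀ a : S, mul (mul a (inv a)) a = a)
    (hinv₂ : ∀ a : S, mul (mul (inv a) a) (inv a) = inv a)
    (hinvuniq : ∀ a b : S, mul (mul a b) a = a → mul (mul b a) b = b → b = inv a)
    (hdist : ∀ x y z : S, mul x (add y z) = add (add (mul x y) (neg x)) (mul x z))
    (hsym : ∀ x y z : S,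
      add x (mul y z) = mul (mul (add x y) (inv x)) (add x z)) :
    (∀ x : S, add (neg x) x = mul x (inv x)) ∧
    (∀ x : S, add x (neg x) = mul (inv x) x) ∧
    (∀ x : S, mul x (inv x) = mul (inv x) x) := by
  have G2o := swlb_bG2 add mul neg inv haddassoc hmulassoc hneg₁ hneg₂ hneguniq
    hinv₁ hinv₂ hinvuniq hdist hsym
  have G2s := swlb_bG2 mul add inv neg hmulassoc haddassoc hinv₁ hinv₂ hinvuniq
    hneg₁ hneg₂ hneguniq hsym hdist
  have P2o := swlb_b2 add mul neg inv haddassoc hmulassoc hneg₁ hneg₂ hneguniq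
    hinv₁ hinv₂ hinvuniq hdist hsym
  have P2s := swlb_b2 mul add inv neg hmulassoc haddassoc hinv₁ hinv₂ hinvuniq
    hneg₁ hneg₂ hneguniq hsym hdist
  have P3o := swlb_b3 add mul neg inv haddassoc hmulassoc hneg₁ hneg₂ hneguniq
    hinv₁ hinv₂ hinvuniq hdist hsym
  refine ⟨fun x => (G2s x).symm, fun x => G2o x, fun x => ?_⟩
  have hee_m := swlb_o_ee mul inv hmulassoc hinv₁ x
  have hee_a : add (mul x (inv x)) (mul x (inv x)) = mul x (inv x) :=
    swlb_bKey1 add mul neg inv haddassoc hmulassoc hneg₁ hneg₂ hneguniq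
      hinv₁ hinv₂ hinvuniq hdist hsym _ hee_m
  have hFF_a := swlb_o_ee add neg haddassoc hneg₁ x
  have hFF_m : mul (add x (neg x)) (add x (neg x)) = add x (neg x) :=
    swlb_bKey1 mul add inv neg hmulassoc haddassoc hinv₁ hinv₂ hinvuniq
      hneg₁ hneg₂ hneguniq hsym hdist _ hFF_a
  have hca := swlb_o_comm add neg haddassoc hneg₁ hneg₂ hneguniq
    (mul x (inv x)) (add x (neg x)) hee_a hFF_a
  have hcm := swlb_o_comm mul inv hmulassoc hinv₁ hinv₂ hinvuniq
    (mul x (inv x)) (add x (neg x)) hee_m hFF_m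
  calc mul x (inv x) = add (neg x) x := G2s x
    _ = add (mul x (inv x)) (add x (neg x)) := (P2o x).symm
    _ = add (add x (neg x)) (mul x (inv x)) := hca
    _ = mul (mul x (inv x)) (add x (neg x)) := (P3o x).symm
    _ = mul (add x (neg x)) (mul x (inv x)) := hcm
    _ = mul (inv x) x := P2s x
end
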